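/- arXiv:2311.07352 — 7 statements merged into one kernel-verified Lean document; each statement's English description precedes it below -/
import Mathlib

section
/- Let f, g : [b, ∞) → ℝ be continuous with f(t) < g(t) for all t ≥ b. Then there exists a real analytic function y : [b, ∞) → ℝ (i.e., extending to a real analytic function on an open neighborhood of [b, ∞)) such that f(t) < y(t) < g(t) for all t ≥ b. -/
/-!
Carleman's construction, applied to the midpoint `(f + g) / 2` with tolerance `(g - f) / 2`.
The `N`-th term `q_N(t) σ(κ_N (t - c_N))` of the series uses the logistic sigmoid `σ` with
`c_N = b + N - 1/2`, and a Weierstrass polynomial `q_N` for what the earlier terms leave of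
the target on `[c_N - 1/2, c_N + 3/2]`. Right of `c_N + 1/2` a steep slope `κ_N` makes `σ ≈ 1`,
so the term finishes the approximation on the block `[b + N, b + N + 1]` without spoiling the block
before it. The sigmoid is holomorphic on `Re z < c_N` and of size `O(e^{-κ_N/2})` left of
`c_N - 1/2`, so `κ_N` can also make the term `2⁻ᴺ`-small on a complex disc of radius `|b| + N`
left of that line. Near every real point all but finitely many terms are then holomorphic and
uniformly summable, which makes the sum real analytic.
-/

open Set Filter Topology Polynomial

noncomputable section

namespace Complex

def sigmoid (z : ℂ) : ℂ := (1 + exp (-z))⁻¹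

@[simp, norm_cast]
lemma sigmoid_ofReal (x : ℝ) : sigmoid x = Real.sigmoid x := by
  simp [sigmoid, Real.sigmoid_def]

lemma one_lt_norm_exp_neg {z : ℂ} (hz : z.re < 0) : 1 < ‖exp (-z)‖ := by
  rw [norm_exp, neg_re]
  exact Real.one_lt_exp_iff.mpr (by linarith)

lemma differentiableAt_sigmoid {z : ℂ} (hz : z.re < 0) : DifferentiableAt ℂ sigmoid z := by
  have hne : 1 + exp (-z) ≠ 0 := fun h => by
    have := one_lt_norm_exp_neg hz
    rw [eq_neg_of_add_eq_zero_right h, norm_neg, norm_one] at this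
    exact lt_irrefl 1 this
  exact ((differentiableAt_const 1).add
    (differentiableAt_neg_iff.mpr differentiableAt_id).cexp).inv hne

lemma norm_sigmoid_le {z : ℂ} {s : ℝ} (hs : 0 < s) (hz : z.re ≤ -s) :
    ‖sigmoid z‖ ≤ (Real.exp s - 1)⁻¹ := by
  have hexp : Real.exp s ≤ ‖exp (-z)‖ := by
    rw [norm_exp, neg_re]
    exact Real.exp_le_exp.mpr (by linarith)
  have hs1 : 0 < Real.exp s - 1 := by linarith [Real.add_one_lt_exp hs.ne']
  have hden : Real.exp s - 1 ≤ ‖1 + exp (-z)‖ := by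
    calc Real.exp s - 1 ≤ ‖exp (-z)‖ - ‖(1 : ℂ)‖ := by rw [norm_one]; linarith
      _ ≤ ‖1 + exp (-z)‖ := by simpa [add_comm] using norm_sub_norm_le (exp (-z)) (-1)
  rw [sigmoid, norm_inv]
  exact inv_anti₀ hs1 hden

end Complex

lemma Real.one_sub_sigmoid_le_exp_neg (x : ℝ) : 1 - sigmoid x ≤ exp (-x) := by
  rw [← sigmoid_neg, ← sigmoid_mul_rexp_neg]
  exact mul_le_of_le_one_left (exp_pos _).le (sigmoid_le_one x)

lemma abs_mul_sigmoid_sub_le (q w x : ℝ) :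
    |q * Real.sigmoid x - w| ≤ (1 - Real.sigmoid x) * |w| + |q - w| := by
  have h0 := Real.sigmoid_pos x
  have h1 := Real.sigmoid_le_one x
  calc |q * Real.sigmoid x - w| = |Real.sigmoid x * (q - w) + -((1 - Real.sigmoid x) * w)| := by
        ring_nf
    _ ≤ Real.sigmoid x * |q - w| + (1 - Real.sigmoid x) * |w| := by
        refine (abs_add_le _ _).trans ?_
        rw [abs_neg, abs_mul, abs_mul, abs_of_pos h0, abs_of_nonneg (sub_nonneg.mpr h1)]
    _ ≤ (1 - Real.sigmoid x) * |w| + |q - w| := by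
        nlinarith [abs_nonneg (q - w)]

namespace Carleman

def sigmoidCutoff (q : ℝ[X]) (κ c t : ℝ) : ℝ := q.eval t * Real.sigmoid (κ * (t - c))

def sigmoidCutoffC (q : ℝ[X]) (κ c : ℝ) (z : ℂ) : ℂ :=
  aeval z q * Complex.sigmoid (κ * (z - c))

lemma ofReal_sigmoidCutoff (q : ℝ[X]) (κ c t : ℝ) :
    (sigmoidCutoff q κ c t : ℂ) = sigmoidCutoffC q κ c t := by
  have hq : aeval (t : ℂ) q = q.eval t := aeval_algebraMap_apply_eq_algebraMap_eval t q
  simp [sigmoidCutoff, sigmoidCutoffC, hq, ← Complex.sigmoid_ofReal]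

lemma continuous_sigmoidCutoff (q : ℝ[X]) (κ c : ℝ) : Continuous (sigmoidCutoff q κ c) :=
  q.continuous.mul (continuous_sigmoid.comp (by fun_prop))

lemma differentiableAt_sigmoidCutoffC (q : ℝ[X]) {κ c : ℝ} (hκ : 0 < κ) {z : ℂ}
    (hz : z.re < c) :
    DifferentiableAt ℂ (sigmoidCutoffC q κ c) z := by
  have hre : (κ * (z - c) : ℂ).re < 0 := by
    simpa using mul_neg_of_pos_of_neg hκ (sub_neg.mpr hz)
  exact (q.differentiable_aeval.differentiableAt).mul
    (DifferentiableAt.comp (g := Complex.sigmoid) z (Complex.differentiableAt_sigmoid hre)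
      (by fun_prop))

lemma exists_sigmoid_slope (W M : ℝ) {δ β : ℝ} (hδ : 0 < δ) (hβ : 0 < β) :
    ∃ κ, 0 < κ ∧ W * Real.exp (-(κ / 2)) ≤ δ ∧
      M * (Real.exp (κ / 2) - 1)⁻¹ ≤ β := by
  have hhalf : Tendsto (fun κ : ℝ => κ / 2) atTop atTop := tendsto_id.atTop_div_const two_pos
  have h1 : Tendsto (fun κ : ℝ => W * Real.exp (-(κ / 2))) atTop (𝓝 0) := by
    simpa using (Real.tendsto_exp_neg_atTop_nhds_zero.comp hhalf).const_mul W
  have h2 : Tendsto (fun κ : ℝ => M * (Real.exp (κ / 2) - 1)⁻¹) atTop (𝓝 0) := by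
    simpa [sub_eq_add_neg] using (tendsto_inv_atTop_zero.comp
      (tendsto_atTop_add_const_right _ (-1) (Real.tendsto_exp_atTop.comp hhalf))).const_mul M
  exact ((eventually_gt_atTop 0).and
    ((h1.eventually (ge_mem_nhds hδ)).and (h2.eventually (ge_mem_nhds hβ)))).exists

def IsCorrection (w : ℝ → ℝ) (c R δ β : ℝ) (q : ℝ[X]) (κ : ℝ) : Prop :=
  0 < κ ∧
  (∀ t ∈ Icc (c - 1 / 2) (c + 1 / 2), |sigmoidCutoff q κ c t - w t| ≤ |w t| + δ) ∧
  (∀ t ∈ Icc (c + 1 / 2) (c + 3 / 2), |sigmoidCutoff q κ c t - w t| ≤ 2 * δ) ∧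
  ∀ z : ℂ, ‖z‖ ≤ R → z.re ≤ c - 1 / 2 → ‖sigmoidCutoffC q κ c z‖ ≤ β

lemma exists_isCorrection {w : ℝ → ℝ} {c : ℝ}
    (hw : ContinuousOn w (Icc (c - 1 / 2) (c + 3 / 2))) (R : ℝ) {δ β : ℝ} (hδ : 0 < δ)
    (hβ : 0 < β) :
    ∃ p : ℝ[X] × ℝ, IsCorrection w c R δ β p.1 p.2 := by
  obtain ⟨q, hq⟩ := exists_polynomial_near_of_continuousOn _ _ w hw δ hδ
  obtain ⟨W, hW⟩ := isCompact_Icc.exists_bound_of_continuousOn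
    (hw.mono (Icc_subset_Icc_left (by linarith : c - 1 / 2 ≤ c + 1 / 2)))
  obtain ⟨M, hM⟩ := (isCompact_closedBall (0 : ℂ) R).exists_bound_of_continuousOn
    (q.continuous_aeval (A := ℂ)).continuousOn
  obtain ⟨κ, hκ, hκW, hκM⟩ := exists_sigmoid_slope W M hδ hβ
  refine ⟨(q, κ), hκ, fun t ht => ?_, fun t ht => ?_, fun z hzR hzc => ?_⟩
  · have hqw := hq t ⟨ht.1, by linarith [ht.2]⟩
    have := abs_mul_sigmoid_sub_le (q.eval t) (w t) (κ * (t - c))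
    have := mul_le_of_le_one_left (abs_nonneg (w t))
      (sub_le_self _ (Real.sigmoid_pos (κ * (t - c))).le)
    unfold sigmoidCutoff
    linarith
  · have hqw := hq t ⟨by linarith [ht.1], ht.2⟩
    have hdecay : (1 - Real.sigmoid (κ * (t - c))) * |w t| ≤ δ :=
      calc (1 - Real.sigmoid (κ * (t - c))) * |w t| ≤ Real.exp (-(κ / 2)) * W := by
            refine mul_le_mul
              ((Real.one_sub_sigmoid_le_exp_neg _).trans (Real.exp_le_exp.mpr ?_))
              (hW t ht) (abs_nonneg _) (Real.exp_pos _).le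
            nlinarith [ht.1]
        _ ≤ δ := by linarith
    have := abs_mul_sigmoid_sub_le (q.eval t) (w t) (κ * (t - c))
    unfold sigmoidCutoff
    linarith
  · have hs : (κ * (z - c) : ℂ).re ≤ -(κ / 2) := by
      simp only [Complex.mul_re, Complex.ofReal_re, Complex.ofReal_im, Complex.sub_re,
        Complex.sub_im, zero_mul, sub_zero]
      nlinarith
    have hM0 : 0 ≤ M := (norm_nonneg _).trans (hM 0 (by simpa using (norm_nonneg z).trans hzR))
    calc ‖sigmoidCutoffC q κ c z‖ ≤ M * (Real.exp (κ / 2) - 1)⁻¹ := by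
          rw [sigmoidCutoffC, norm_mul]
          exact mul_le_mul (hM z (by simpa using hzR))
            (Complex.norm_sigmoid_le (half_pos hκ) hs) (norm_nonneg _) hM0
      _ ≤ β := hκM

lemma analyticAt_tsum_of_complex {ι : Type*} {f : ι → ℝ → ℝ} {F : ι → ℂ → ℂ}
    {u : ι → ℝ} {x r : ℝ} (hr : 0 < r) (hu : Summable u)
    (hF : ∀ i, DifferentiableOn ℂ (F i) (Metric.ball (x : ℂ) r))
    (hFu : ∀ i, ∀ z ∈ Metric.ball (x : ℂ) r, ‖F i z‖ ≤ u i)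
    (hfF : ∀ i (t : ℝ), (f i t : ℂ) = F i t) :
    AnalyticAt ℝ (fun t => ∑' i, f i t) x := by
  have hG : AnalyticAt ℂ (fun z => ∑' i, F i z) x :=
    (Complex.differentiableOn_tsum_of_summable_norm hu hF Metric.isOpen_ball hFu).analyticAt
      (Metric.isOpen_ball.mem_nhds (Metric.mem_ball_self hr))
  refine hG.re_ofReal.congr (Eventually.of_forall fun t => ?_)
  simp only [← hfF, ← Complex.ofReal_tsum, Complex.ofReal_re]

lemma analyticAt_sigmoidCutoff (q : ℝ[X]) (κ c x : ℝ) :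
    AnalyticAt ℝ (sigmoidCutoff q κ c) x :=
  (AnalyticOnNhd.eval_polynomial q x trivial).mul
    (AnalyticAt.sigmoid (f := fun t => κ * (t - c)) (by fun_prop))

section Construction

variable (a : ℝ) (Z : ℝ → ℝ) (ε : ℕ → ℝ)

def leftBound (N : ℕ) : ℝ := (1 / 2) ^ N * ε N / 8

def initialPoly : ℝ[X] :=
  Classical.epsilon fun q : ℝ[X] => ∀ t ∈ Icc (a - 1) a, |q.eval t - Z t| ≤ ε 0 / 4

def correction (S : ℝ → ℝ) (N : ℕ) : ℝ[X] × ℝ :=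
  Classical.epsilon fun p : ℝ[X] × ℝ => IsCorrection (fun t => Z t - S t) (a + N - 1 / 2)
    (|a| + N) (ε (N + 1) / 8) (leftBound ε N) p.1 p.2

def partialSum : ℕ → ℝ → ℝ
  | 0 => fun t => (initialPoly a Z ε).eval t
  | N + 1 =>
    let p := correction a Z ε (partialSum N) N
    fun t => partialSum N t + sigmoidCutoff p.1 p.2 (a + N - 1 / 2) t

def coeffs (N : ℕ) : ℝ[X] × ℝ := correction a Z ε (partialSum a Z ε N) N

def term (N : ℕ) : ℝ → ℝ :=
  sigmoidCutoff (coeffs a Z ε N).1 (coeffs a Z ε N).2 (a + N - 1 / 2)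

def termC (N : ℕ) : ℂ → ℂ :=
  sigmoidCutoffC (coeffs a Z ε N).1 (coeffs a Z ε N).2 (a + N - 1 / 2)

def approximant (t : ℝ) : ℝ := (initialPoly a Z ε).eval t + ∑' N, term a Z ε N t

lemma partialSum_succ (N : ℕ) (t : ℝ) :
    partialSum a Z ε (N + 1) t = partialSum a Z ε N t + term a Z ε N t := rfl

lemma partialSum_eq (N : ℕ) (t : ℝ) :
    partialSum a Z ε N t =
      (initialPoly a Z ε).eval t + ∑ k ∈ Finset.range N, term a Z ε k t := by
  induction N with
  | zero => simp [partialSum]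
  | succ N ih => rw [partialSum_succ, ih, Finset.sum_range_succ, add_assoc]

lemma continuous_partialSum : ∀ N, Continuous (partialSum a Z ε N)
  | 0 => (initialPoly a Z ε).continuous
  | N + 1 => (continuous_partialSum N).add (continuous_sigmoidCutoff _ _ _)

lemma ofReal_term (N : ℕ) (t : ℝ) : (term a Z ε N t : ℂ) = termC a Z ε N t :=
  ofReal_sigmoidCutoff _ _ _ _

lemma analyticAt_term (N : ℕ) (x : ℝ) : AnalyticAt ℝ (term a Z ε N) x :=
  analyticAt_sigmoidCutoff _ _ _ x

variable {Z ε}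

lemma leftBound_add_le (hε : ∀ N, 0 < ε N) (hε_anti : Antitone ε) (k M : ℕ) :
    leftBound ε (k + M) ≤ (1 / 2) ^ k * (ε M / 8) := by
  have hpow : ((1 : ℝ) / 2) ^ (k + M) ≤ (1 / 2) ^ k :=
    pow_le_pow_of_le_one (by norm_num) (by norm_num) (Nat.le_add_right k M)
  have := mul_le_mul hpow (hε_anti (Nat.le_add_left M k)) (hε _).le (by positivity)
  rw [leftBound]
  linarith

lemma summable_leftBound (hε : ∀ N, 0 < ε N) (hε_anti : Antitone ε) :
    Summable (leftBound ε) :=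
  Summable.of_nonneg_of_le (fun N => by unfold leftBound; have := hε N; positivity)
    (leftBound_add_le hε hε_anti · 0) ((summable_geometric_two).mul_right _)

lemma tsum_leftBound_add_le (hε : ∀ N, 0 < ε N) (hε_anti : Antitone ε) (M : ℕ) :
    ∑' k, leftBound ε (k + M) ≤ ε M / 4 := by
  calc ∑' k, leftBound ε (k + M) ≤ ∑' k : ℕ, (1 / 2 : ℝ) ^ k * (ε M / 8) :=
        Summable.tsum_le_tsum (leftBound_add_le hε hε_anti · M)
          ((summable_nat_add_iff M).mpr (summable_leftBound hε hε_anti))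
          (summable_geometric_two.mul_right _)
    _ = ε M / 4 := by rw [tsum_mul_right, tsum_geometric_two]; ring

lemma abs_initialPoly_sub_le (hZ : Continuous Z) (hε : 0 < ε 0) :
    ∀ t ∈ Icc (a - 1) a, |(initialPoly a Z ε).eval t - Z t| ≤ ε 0 / 4 := by
  obtain ⟨q, hq⟩ :=
    exists_polynomial_near_of_continuousOn (a - 1) a Z hZ.continuousOn (ε 0 / 4) (by positivity)
  exact Classical.epsilon_spec
    (p := fun q : ℝ[X] => ∀ t ∈ Icc (a - 1) a, |q.eval t - Z t| ≤ ε 0 / 4)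
    ⟨q, fun t ht => (hq t ht).le⟩

lemma isCorrection_coeffs (hZ : Continuous Z) (hε : ∀ N, 0 < ε N) (N : ℕ) :
    IsCorrection (fun t => Z t - partialSum a Z ε N t) (a + N - 1 / 2) (|a| + N) (ε (N + 1) / 8)
      (leftBound ε N) (coeffs a Z ε N).1 (coeffs a Z ε N).2 :=
  Classical.epsilon_spec <| exists_isCorrection
    (hZ.sub (continuous_partialSum a Z ε N)).continuousOn _ (by have := hε (N + 1); positivity)
    (by unfold leftBound; have := hε N; positivity)

lemma abs_partialSum_sub_le (hZ : Continuous Z) (hε : ∀ N, 0 < ε N) :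
    ∀ N : ℕ, ∀ t ∈ Icc (a + N - 1) (a + N), |partialSum a Z ε N t - Z t| ≤ ε N / 4
  | 0, t, ht => abs_initialPoly_sub_le a hZ (hε 0) t (by simpa using ht)
  | N + 1, t, ht => by
    push_cast at ht
    have h := (isCorrection_coeffs a hZ hε N).2.2.1 t ⟨by linarith [ht.1], by linarith [ht.2]⟩
    calc |partialSum a Z ε (N + 1) t - Z t|
        = |term a Z ε N t - (Z t - partialSum a Z ε N t)| := by rw [partialSum_succ]; ring_nf
      _ ≤ ε (N + 1) / 4 := by unfold term; linarith

lemma abs_partialSum_succ_sub_le (hZ : Continuous Z) (hε : ∀ N, 0 < ε N)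
    (hε_anti : Antitone ε) (N : ℕ) (t : ℝ) (ht : t ∈ Icc (a + N - 1) (a + N)) :
    |partialSum a Z ε (N + 1) t - Z t| ≤ 3 * ε N / 8 := by
  have hS := abs_partialSum_sub_le a hZ hε N t ht
  have h := (isCorrection_coeffs a hZ hε N).2.1 t ⟨by linarith [ht.1], by linarith [ht.2]⟩
  have := hε_anti (Nat.le_succ N)
  rw [abs_sub_comm] at hS
  calc |partialSum a Z ε (N + 1) t - Z t|
      = |term a Z ε N t - (Z t - partialSum a Z ε N t)| := by rw [partialSum_succ]; ring_nf
    _ ≤ 3 * ε N / 8 := by unfold term; linarith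

lemma norm_termC_le (hZ : Continuous Z) (hε : ∀ N, 0 < ε N) {N : ℕ} {z : ℂ}
    (hzR : ‖z‖ ≤ |a| + N) (hzc : z.re ≤ a + N - 1) :
    ‖termC a Z ε N z‖ ≤ leftBound ε N :=
  (isCorrection_coeffs a hZ hε N).2.2.2 z hzR (by linarith)

lemma eventually_differentiableAt_and_norm_termC_le (hZ : Continuous Z) (hε : ∀ N, 0 < ε N)
    (r : ℝ) :
    ∀ᶠ N in atTop, ∀ z : ℂ, ‖z‖ ≤ r →
      DifferentiableAt ℂ (termC a Z ε N) z ∧ ‖termC a Z ε N z‖ ≤ leftBound ε N := by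
  filter_upwards [eventually_ge_atTop ⌈r + |a| + 1⌉₊] with N hN z hz
  have hN' : r + |a| + 1 ≤ N := (Nat.le_ceil _).trans (by exact_mod_cast hN)
  have hre := (Complex.re_le_norm z).trans hz
  have := neg_abs_le a
  have := abs_nonneg a
  exact ⟨differentiableAt_sigmoidCutoffC _ (isCorrection_coeffs a hZ hε N).1 (by linarith),
    norm_termC_le a hZ hε (by linarith) (by linarith)⟩

lemma summable_term (hZ : Continuous Z) (hε : ∀ N, 0 < ε N) (hε_anti : Antitone ε) (t : ℝ) :
    Summable (term a Z ε · t) :=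
  .of_norm_bounded_eventually_nat (summable_leftBound hε hε_anti)
    ((eventually_differentiableAt_and_norm_termC_le a hZ hε ‖t‖).mono fun N hN => by
      rw [← Complex.norm_real, ofReal_term]
      exact (hN t (Complex.norm_real t).le).2)

lemma abs_approximant_sub_lt (hZ : Continuous Z) (hε : ∀ N, 0 < ε N) (hε_anti : Antitone ε)
    (N : ℕ) (t : ℝ) (ht : t ∈ Icc (a + N) (a + N + 1)) :
    |approximant a Z ε t - Z t| < ε (N + 1) := by
  have hsplit : approximant a Z ε t - Z t =
      (partialSum a Z ε (N + 2) t - Z t) + ∑' k, term a Z ε (k + (N + 2)) t := by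
    rw [approximant, ← (summable_term a hZ hε hε_anti t).sum_add_tsum_nat_add (N + 2),
      partialSum_eq]
    ring
  have hhead := abs_partialSum_succ_sub_le a hZ hε hε_anti (N + 1) t
    (by push_cast; constructor <;> linarith [ht.1, ht.2])
  have htail : |∑' k, term a Z ε (k + (N + 2)) t| ≤ ε (N + 1) / 4 := by
    have hbound (k : ℕ) : ‖term a Z ε (k + (N + 2)) t‖ ≤ leftBound ε (k + (N + 2)) := by
      rw [← Complex.norm_real, ofReal_term]
      have : |t| ≤ |a| + N + 1 :=
        abs_le.mpr ⟨by linarith [ht.1, neg_abs_le a], by linarith [ht.2, le_abs_self a]⟩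
      refine norm_termC_le a hZ hε ?_ ?_
      · rw [Complex.norm_real, Real.norm_eq_abs]; push_cast; linarith
      · simp only [Complex.ofReal_re]; push_cast; linarith [ht.2]
    calc |∑' k, term a Z ε (k + (N + 2)) t|
        ≤ ∑' k, leftBound ε (k + (N + 2)) :=
          tsum_of_norm_bounded
            ((summable_nat_add_iff _).mpr (summable_leftBound hε hε_anti)).hasSum hbound
      _ ≤ ε (N + 2) / 4 := tsum_leftBound_add_le hε hε_anti _
      _ ≤ ε (N + 1) / 4 := by linarith [hε_anti (Nat.le_succ (N + 1))]
  rw [hsplit]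
  calc _ ≤ |partialSum a Z ε (N + 2) t - Z t| + |∑' k, term a Z ε (k + (N + 2)) t| :=
        abs_add_le _ _
    _ < ε (N + 1) := by linarith [hε (N + 1)]

lemma analyticAt_approximant (hZ : Continuous Z) (hε : ∀ N, 0 < ε N) (hε_anti : Antitone ε)
    (x : ℝ) :
    AnalyticAt ℝ (approximant a Z ε) x := by
  obtain ⟨K, hK⟩ :=
    eventually_atTop.mp (eventually_differentiableAt_and_norm_termC_le a hZ hε (‖x‖ + 1))
  have hball : ∀ z ∈ Metric.ball (x : ℂ) 1, ‖z‖ ≤ ‖x‖ + 1 := fun z hz => by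
    have := norm_le_norm_add_norm_sub' z x
    rw [Complex.norm_real] at this
    linarith [mem_ball_iff_norm.mp hz]
  have htail : AnalyticAt ℝ (fun t => ∑' k, term a Z ε (k + K) t) x :=
    analyticAt_tsum_of_complex one_pos
      ((summable_nat_add_iff K).mpr (summable_leftBound hε hε_anti))
      (fun k z hz => (hK (k + K) (by omega) z (hball z hz)).1.differentiableWithinAt)
      (fun k z hz => (hK (k + K) (by omega) z (hball z hz)).2)
      (fun k t => ofReal_term ..)
  have hhead : AnalyticAt ℝ (partialSum a Z ε K) x := by
    simp_rw [funext (partialSum_eq a Z ε K)]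
    exact (AnalyticOnNhd.eval_polynomial _ x trivial).add
      (Finset.analyticAt_fun_sum _ fun k _ => analyticAt_term a Z ε k x)
  refine (hhead.add htail).congr (Eventually.of_forall fun t => ?_)
  rw [Pi.add_apply, approximant, ← (summable_term a hZ hε hε_anti t).sum_add_tsum_nat_add K,
    partialSum_eq, add_assoc]

end Construction

end Carleman

end

lemma exists_antitone_pos_le {E : ℝ → ℝ} {a : ℝ} (hE : ContinuousOn E (Ici a))
    (hEpos : ∀ t ∈ Ici a, 0 < E t) :
    ∃ ε : ℕ → ℝ, (∀ N, 0 < ε N) ∧ Antitone ε ∧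
      ∀ (N : ℕ), ∀ t ∈ Icc a (a + N), ε N ≤ E t := by
  have hcpt (N : ℕ) : IsCompact (E '' Icc a (a + N)) :=
    isCompact_Icc.image_of_continuousOn (hE.mono Icc_subset_Ici_self)
  have hne (N : ℕ) : (Icc a (a + N)).Nonempty := nonempty_Icc.mpr (by simp)
  refine ⟨fun N => sInf (E '' Icc a (a + N)), fun N => ?_, fun M N hMN => ?_,
    fun N t ht => csInf_le (hcpt N).bddBelow (mem_image_of_mem E ht)⟩
  · obtain ⟨t, ht, hEt⟩ := (hcpt N).sInf_mem ((hne N).image E)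
    simpa only [← hEt] using hEpos t ht.1
  · exact csInf_le_csInf (hcpt N).bddBelow ((hne M).image E)
      (image_mono (Icc_subset_Icc_right (by gcongr)))

theorem exists_analytic_abs_sub_lt {Z E : ℝ → ℝ} (a : ℝ) (hZ : ContinuousOn Z (Ici a))
    (hE : ContinuousOn E (Ici a)) (hEpos : ∀ t ∈ Ici a, 0 < E t) :
    ∃ y : ℝ → ℝ, AnalyticOnNhd ℝ y univ ∧ ∀ t ∈ Ici a, |y t - Z t| < E t := by
  obtain ⟨ε, hε, hε_anti, hεE⟩ := exists_antitone_pos_le hE hEpos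
  set Z' : ℝ → ℝ := fun t => Z (max t a)
  have hZ' : Continuous Z' :=
    hZ.comp_continuous (continuous_id.max continuous_const) fun t => le_max_right t a
  refine ⟨Carleman.approximant a Z' ε,
    fun x _ => Carleman.analyticAt_approximant a hZ' hε hε_anti x, fun t ht => ?_⟩
  have ht0 : 0 ≤ t - a := sub_nonneg.mpr ht
  set N := ⌊t - a⌋₊
  have hN : t ∈ Icc (a + N) (a + N + 1) :=
    ⟨by linarith [Nat.floor_le ht0], by linarith [Nat.lt_floor_add_one (t - a)]⟩
  have hZt : Z' t = Z t := congrArg Z (max_eq_left ht)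
  calc |Carleman.approximant a Z' ε t - Z t| < ε (N + 1) :=
        hZt ▸ Carleman.abs_approximant_sub_lt a hZ' hε hε_anti N t hN
    _ ≤ E t := hεE (N + 1) t ⟨ht, by push_cast; linarith [hN.2]⟩

theorem exists_analytic_between (b : ℝ) (f g : ℝ → ℝ)
    (hf : ContinuousOn f (Set.Ici b)) (hg : ContinuousOn g (Set.Ici b))
    (hfg : ∀ t ∈ Set.Ici b, f t < g t) :
    ∃ (y : ℝ → ℝ) (U : Set ℝ), IsOpen U ∧ Set.Ici b ⊆ U ∧ AnalyticOnNhd ℝ y U ∧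
      ∀ t ∈ Set.Ici b, f t < y t ∧ y t < g t := by
  obtain ⟨y, hy, hyfg⟩ := exists_analytic_abs_sub_lt (Z := fun t => (f t + g t) / 2)
    (E := fun t => (g t - f t) / 2) b ((hf.add hg).div_const 2) ((hg.sub hf).div_const 2)
    fun t ht => by linarith [hfg t ht]
  refine ⟨y, univ, isOpen_univ, subset_univ _, hy, fun t ht => ?_⟩
  have := abs_sub_lt_iff.mp (hyfg t ht)
  constructor <;> linarith
end

section
/- Let Γ be a nontrivial ordered abelian group and [Γ] its ordered set of archimedean classes. If [Γ] has no largest element then cf(Γ) = cf([Γ]); if [Γ] has a largest element then cf(Γ) = ω. -/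
/-!
If `[Γ]` has no largest element, a set is cofinal in `Γ` iff it is cofinal for `archLE`, up to
replacing elements by their absolute values: a set cofinal in the classes must contain elements of
every class above `[a]`, hence elements larger than `|a|`. If `[a]` is the largest class, the
multiples `n • |a|` form a countable cofinal subset, and a nontrivial ordered group has no maximum,
so no finite subset is cofinal.
-/

open Cardinal

/-- The cofinality of a relation, as `Order.cof r` was defined in the older Mathlib. -/
noncomputable def relCof {α : Type*} (r : α → α → Prop) : Cardinal :=
  sInf { c | ∃ S : Set α, (∀ a, ∃ b ∈ S, r a b) ∧ Cardinal.mk S = c }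

/-- `[a] ≤ [b]` for the archimedean classes of an ordered abelian group:
`|a| ≤ n|b|` for some `n ≥ 1`. -/
def archLE {Γ : Type*} [AddCommGroup Γ] [LinearOrder Γ] [IsOrderedAddMonoid Γ] (a b : Γ) : Prop :=
  ∃ n : ℕ, 1 ≤ n ∧ |a| ≤ n • |b|

section relCof

variable {α : Type*}

def IsRelCofinal (r : α → α → Prop) (S : Set α) : Prop :=
  ∀ a, ∃ b ∈ S, r a b

lemma relCof_le {r : α → α → Prop} {S : Set α} (h : IsRelCofinal r S) : relCof r ≤ #S :=
  csInf_le' ⟨S, h, rfl⟩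

lemma le_relCof_iff {r : α → α → Prop} (hr : ∀ a, r a a) {c : Cardinal} :
    c ≤ relCof r ↔ ∀ S : Set α, IsRelCofinal r S → c ≤ #S := by
  refine ⟨fun h S hS ↦ h.trans (relCof_le hS), fun h ↦ ?_⟩
  refine le_csInf ⟨#(Set.univ : Set α), Set.univ, fun a ↦ ⟨a, trivial, hr a⟩, rfl⟩ ?_
  rintro _ ⟨S, hS, rfl⟩
  exact h S hS

lemma relCof_le_relCof_of_image {r s : α → α → Prop} (hr : ∀ a, r a a) (f : α → α)
    (hf : ∀ S, IsRelCofinal r S → IsRelCofinal s (f '' S)) : relCof s ≤ relCof r := by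
  rw [le_relCof_iff hr]
  exact fun S hS ↦ (relCof_le (hf S hS)).trans mk_image_le

lemma relCof_le_eq_cof [Preorder α] : relCof ((· ≤ ·) : α → α → Prop) = Order.cof α :=
  le_antisymm ((Order.le_cof_iff).2 fun _ hS ↦ relCof_le hS)
    ((le_relCof_iff le_refl).2 fun _ hS ↦ Order.cof_le hS)

end relCof

section archLE

variable {Γ : Type*} [AddCommGroup Γ] [LinearOrder Γ] [IsOrderedAddMonoid Γ]

lemma archLE_of_abs_le {a b : Γ} (h : |a| ≤ b) : archLE a b :=
  ⟨1, le_rfl, by rwa [one_smul, abs_of_nonneg ((abs_nonneg a).trans h)]⟩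

lemma archLE_refl (a : Γ) : archLE a a :=
  ⟨1, le_rfl, by rw [one_smul]⟩

lemma archLE.trans_abs_le {a b c : Γ} (h : archLE a b) (hbc : |b| ≤ |c|) : archLE a c :=
  let ⟨n, hn, hab⟩ := h
  ⟨n, hn, hab.trans (nsmul_le_nsmul_right hbc n)⟩

lemma archLE.le_nsmul_abs {a b : Γ} (h : archLE a b) : ∃ n : ℕ, a ≤ n • |b| :=
  let ⟨n, _, hab⟩ := h
  ⟨n, (le_abs_self a).trans hab⟩

lemma isRelCofinal_archLE_of_isCofinal {S : Set Γ} (hS : IsCofinal S) :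
    IsRelCofinal archLE S := fun a ↦
  let ⟨b, hb, hab⟩ := hS |a|
  ⟨b, hb, archLE_of_abs_le hab⟩

lemma isCofinal_abs_image_of_isRelCofinal_archLE (hnl : ¬ ∃ a : Γ, ∀ b : Γ, archLE b a)
    {S : Set Γ} (hS : IsRelCofinal archLE S) : IsCofinal (abs '' S) := by
  intro a
  obtain ⟨b, hb⟩ := not_forall.1 (not_exists.1 hnl a)
  obtain ⟨s, hs, hbs⟩ := hS b
  have has : |a| < |s| := lt_of_not_ge fun hsa ↦ hb (hbs.trans_abs_le hsa)
  exact ⟨|s|, Set.mem_image_of_mem _ hs, (le_abs_self a).trans has.le⟩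

lemma cof_le_aleph0_of_forall_archLE {a : Γ} (ha : ∀ b : Γ, archLE b a) :
    Order.cof Γ ≤ ℵ₀ := by
  have hcof : IsCofinal (Set.range fun n : ℕ ↦ n • |a|) := fun b ↦
    let ⟨n, hn⟩ := (ha b).le_nsmul_abs
    ⟨n • |a|, ⟨n, rfl⟩, hn⟩
  have := (Set.countable_range fun n : ℕ ↦ n • |a|).to_subtype
  exact (Order.cof_le hcof).trans mk_le_aleph0

end archLE

/-- `cf([Γ])` is taken for the total preorder `archLE` on representatives, which has the same
cofinal subsets as `[Γ]`. -/
theorem cof_of_archClasses {Γ : Type*} [AddCommGroup Γ] [LinearOrder Γ] [IsOrderedAddMonoid Γ] (hnt : ∃ γ : Γ, γ ≠ 0) :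
    ((¬ ∃ a : Γ, ∀ b : Γ, archLE b a) →
        relCof ((· ≤ ·) : Γ → Γ → Prop) = relCof (archLE : Γ → Γ → Prop)) ∧
    ((∃ a : Γ, ∀ b : Γ, archLE b a) →
        relCof ((· ≤ ·) : Γ → Γ → Prop) = Cardinal.aleph0) := by
  refine ⟨fun hnl ↦ le_antisymm ?_ ?_, fun ⟨a, ha⟩ ↦ ?_⟩
  · exact relCof_le_relCof_of_image (archLE_refl (Γ := Γ)) abs fun _ ↦
      isCofinal_abs_image_of_isRelCofinal_archLE hnl
  · exact relCof_le_relCof_of_image le_refl id fun S hS ↦ by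
      rw [Set.image_id]
      exact isRelCofinal_archLE_of_isCofinal hS
  · obtain ⟨γ, hγ⟩ := hnt
    have : Nontrivial Γ := nontrivial_of_ne γ 0 hγ
    rw [relCof_le_eq_cof]
    exact (cof_le_aleph0_of_forall_archLE ha).antisymm Order.aleph0_le_cof
end

section
/- Let Γ be an ordered abelian group and Δ ≠ {0} an ordered subgroup such that the quotient group Γ/Δ has rational rank at most ℵ₀ (i.e., ℚ ⊗ (Γ/Δ) has countable dimension over ℚ). Then cf(Γ) ≤ cf(Δ). -/
/-!
If `Δ` is unbounded in `Γ` it is cofinal, so `cf Γ = cf Δ`. Otherwise fix an upper bound `γ₀`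
of `Δ` and send `γ` to the image of `max γ γ₀` in `ℚ ⊗ (Γ/Δ)`, a countable set. Two elements
`a, b ≥ Δ` with the same image satisfy `n • (a - b) ∈ Δ` for some `n ≠ 0`, which forces
`a ≤ b + b`; so the fibres are bounded above, giving `cf Γ ≤ ℵ₀`. Finally `Δ ≠ 0` has no largest
element, so `ℵ₀ ≤ cf Δ`.
-/

open Cardinal TensorProduct

universe u

lemma Module.countable_of_rank_le_aleph0 {K V : Type*} [DivisionRing K] [Countable K]
    [AddCommGroup V] [Module K V] (h : Module.rank K V ≤ ℵ₀) : Countable V := by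
  have : Countable (Module.Free.ChooseBasisIndex K V) := by
    rwa [← Cardinal.mk_le_aleph0_iff, ← Module.Free.rank_eq_card_chooseBasisIndex]
  exact Countable.of_equiv _ (Module.Free.chooseBasis K V).repr.toEquiv.symm

lemma exists_nsmul_eq_zero_of_tmul_eq_zero {M : Type*} [AddCommGroup M] {m : M}
    (h : (1 : ℚ) ⊗ₜ[ℤ] m = 0) : ∃ n : ℕ, n ≠ 0 ∧ n • m = 0 := by
  have : IsLocalizedModule (nonZeroDivisors ℤ) (TensorProduct.mk ℤ ℚ M 1) :=
    (isLocalizedModule_iff_isBaseChange (nonZeroDivisors ℤ) ℚ _).mpr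
      (TensorProduct.isBaseChange ℤ M ℚ)
  obtain ⟨s, hs⟩ :=
    (IsLocalizedModule.eq_zero_iff (nonZeroDivisors ℤ) (TensorProduct.mk ℤ ℚ M 1)).mp h
  exact ⟨(s : ℤ).natAbs, Int.natAbs_ne_zero.mpr (nonZeroDivisors.coe_ne_zero s),
    natAbs_nsmul_eq_zero.mpr hs⟩

theorem Order.cof_le_of_bddAbove_preimage {α β : Type u} [Preorder α] (f : α → β)
    (hf : ∀ b, BddAbove (f ⁻¹' {b})) : Order.cof α ≤ #β := by
  choose bound hbound using hf
  exact (Order.cof_le fun a ↦ ⟨bound (f a), Set.mem_range_self _, hbound (f a) rfl⟩).trans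
    mk_range_le

section OrderedGroup

variable {Γ : Type*} [AddCommGroup Γ] [LinearOrder Γ] [IsOrderedAddMonoid Γ]

lemma le_add_self_of_nsmul_sub_le {a b : Γ} {n : ℕ} (hb : 0 ≤ b) (hn : n ≠ 0)
    (h : n • (a - b) ≤ b) : a ≤ b + b := by
  by_contra! hlt
  have hab : b < a - b := lt_sub_iff_add_lt.mpr hlt
  have : a - b ≤ n • (a - b) := le_self_nsmul (hb.trans hab.le) hn
  exact (hab.trans_le (this.trans h)).false

lemma AddSubgroup.le_add_self_of_tmul_mk_eq {Δ : AddSubgroup Γ} {a b : Γ}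
    (hb : b ∈ upperBounds (Δ : Set Γ))
    (h : (1 : ℚ) ⊗ₜ[ℤ] (a : Γ ⧸ Δ) = (1 : ℚ) ⊗ₜ[ℤ] (b : Γ ⧸ Δ)) : a ≤ b + b := by
  obtain ⟨n, hn, hna⟩ := exists_nsmul_eq_zero_of_tmul_eq_zero
    (m := ((a - b : Γ) : Γ ⧸ Δ)) (by rw [QuotientAddGroup.mk_sub, tmul_sub, h, sub_self])
  have hmem : n • (a - b) ∈ Δ := by
    rwa [← QuotientAddGroup.eq_zero_iff, QuotientAddGroup.mk_nsmul]
  exact le_add_self_of_nsmul_sub_le (hb Δ.zero_mem) hn (hb hmem)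

lemma AddSubgroup.cof_le_aleph0_of_bddAbove (Δ : AddSubgroup Γ) (hΔ : BddAbove (Δ : Set Γ))
    (hrank : Module.rank ℚ (ℚ ⊗[ℤ] (Γ ⧸ Δ)) ≤ ℵ₀) : Order.cof Γ ≤ ℵ₀ := by
  obtain ⟨γ₀, hγ₀⟩ := hΔ
  have : Countable (ℚ ⊗[ℤ] (Γ ⧸ Δ)) := Module.countable_of_rank_le_aleph0 hrank
  let f : Γ → ℚ ⊗[ℤ] (Γ ⧸ Δ) := fun γ ↦ (1 : ℚ) ⊗ₜ ((max γ γ₀ : Γ) : Γ ⧸ Δ)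
  have hub : ∀ γ, max γ γ₀ ∈ upperBounds (Δ : Set Γ) :=
    fun γ δ hδ ↦ (hγ₀ hδ).trans (le_max_right γ γ₀)
  refine (Order.cof_le_of_bddAbove_preimage f fun v ↦ ?_).trans mk_le_aleph0
  rcases (f ⁻¹' {v}).eq_empty_or_nonempty with hv | ⟨b, rfl⟩
  · simp [hv]
  · exact ⟨max b γ₀ + max b γ₀, fun a ha ↦
      (le_max_left a γ₀).trans (AddSubgroup.le_add_self_of_tmul_mk_eq (hub b) ha)⟩

end OrderedGroup

/-- Let `Γ` be an ordered abelian group and `Δ ≠ {0}` a subgroup such that the quotient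
`Γ/Δ` has rational rank at most `ℵ₀` (i.e. `ℚ ⊗ (Γ/Δ)` has countable dimension over `ℚ`).
Then `cf(Γ) ≤ cf(Δ)`. -/
theorem cof_le_cof_of_ratRank_countable {Γ : Type*} [AddCommGroup Γ] [LinearOrder Γ] [IsOrderedAddMonoid Γ]
    (Δ : AddSubgroup Γ) (hΔ : Δ ≠ ⊥)
    (hrank : Module.rank ℚ (TensorProduct ℤ ℚ (Γ ⧸ Δ)) ≤ Cardinal.aleph0) :
    Order.cof Γ ≤ Order.cof Δ := by
  by_cases hbdd : BddAbove (Δ : Set Γ)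
  · have : Nontrivial Δ := (AddSubgroup.nontrivial_iff_ne_bot Δ).mpr hΔ
    calc Order.cof Γ ≤ ℵ₀ := Δ.cof_le_aleph0_of_bddAbove hbdd hrank
      _ ≤ Order.cof Δ := Order.aleph0_le_cof
  · exact (Order.cof_eq_of_isCofinal (IsCofinal.of_not_bddAbove hbdd)).ge
end

section
/- Let S be a short linearly ordered set and T an η₁-ordered set. Then any order embedding of a linearly ordered subset A of S into T extends to an order embedding of all of S into T. In particular, there exists an order embedding of S into T. -/
/-!
Zorn's lemma gives a maximal partial order embedding `S ⇀ T` extending the given one, viewed as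
a graph in `S × T`. If some `s : S` were missing from its domain, shortness of `S` provides
countable cofinal and coinitial subsets of the domain points below and above `s`; their images
are countable sets `A < B` in `T`, and the `η₁` property yields `t` with `A < t < B`, which lies
strictly between all images of points below and above `s`. Adding `(s, t)` contradicts
maximality.
-/

/-- A linear order is short if every subset has countable cofinality and countable
coinitiality. -/
def IsShortCof (S : Type*) [LinearOrder S] : Prop :=
  ∀ A : Set S, Order.cof A ≤ Cardinal.aleph0 ∧
    Order.cof (A)ᵒᵈ ≤ Cardinal.aleph0

/-- A linear order `T` is `η₁` if for all countable subsets `A < B` of `T` (possibly empty)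
there is `t ∈ T` with `A < t < B`. -/
def IsEtaOne (T : Type*) [LinearOrder T] : Prop :=
  ∀ A B : Set T, A.Countable → B.Countable → (∀ a ∈ A, ∀ b ∈ B, a < b) →
    ∃ t : T, (∀ a ∈ A, a < t) ∧ ∀ b ∈ B, t < b

open Set

theorem Order.exists_countable_isCofinal {α : Type*} [Preorder α]
    (h : Order.cof α ≤ Cardinal.aleph0) : ∃ C : Set α, C.Countable ∧ IsCofinal C := by
  obtain ⟨C, hC, hcard⟩ := Order.exists_cof_eq α
  refine ⟨C, ?_, hC⟩
  rw [← countable_coe_iff, ← Cardinal.mk_le_aleph0_iff]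
  exact hcard.le.trans h

namespace IsShortCof

variable {α : Type*} [LinearOrder α]

theorem exists_countable_isCofinalFor (hα : IsShortCof α) (A : Set α) :
    ∃ C ⊆ A, C.Countable ∧ IsCofinalFor A C := by
  obtain ⟨C, hC, hcof⟩ := Order.exists_countable_isCofinal (hα A).1
  refine ⟨(↑) '' C, Subtype.coe_image_subset A C, hC.image _, fun a ha => ?_⟩
  obtain ⟨c, hc, hac⟩ := hcof ⟨a, ha⟩
  exact ⟨c, mem_image_of_mem _ hc, hac⟩

theorem exists_countable_isCoinitialFor (hα : IsShortCof α) (A : Set α) :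
    ∃ C ⊆ A, C.Countable ∧ IsCoinitialFor A C := by
  obtain ⟨C, hC, hcof⟩ := Order.exists_countable_isCofinal (hα A).2
  refine ⟨(fun c => (OrderDual.ofDual c : A)) '' C, ?_, hC.image _, fun a ha => ?_⟩
  · rintro _ ⟨c, -, rfl⟩
    exact (OrderDual.ofDual c).2
  · obtain ⟨c, hc, hca⟩ := hcof (OrderDual.toDual ⟨a, ha⟩)
    exact ⟨_, mem_image_of_mem _ hc, hca⟩

end IsShortCof

section Graph

variable {α β : Type*} [LinearOrder α] [LinearOrder β]

/-- `P` is the graph of an order embedding from its domain `Prod.fst '' P` into `β`. -/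
def IsOrderEmbeddingGraph (P : Set (α × β)) : Prop :=
  ∀ p ∈ P, ∀ q ∈ P, p.1 ≤ q.1 ↔ p.2 ≤ q.2

theorem isOrderEmbeddingGraph_range {A : Set α} (f : A ↪o β) :
    IsOrderEmbeddingGraph (range fun a : A => ((a : α), f a)) := by
  rintro _ ⟨a, rfl⟩ _ ⟨b, rfl⟩
  exact f.le_iff_le.symm

namespace IsOrderEmbeddingGraph

variable {P : Set (α × β)} {p q : α × β}

theorem lt_iff (hP : IsOrderEmbeddingGraph P) (hp : p ∈ P) (hq : q ∈ P) :
    p.1 < q.1 ↔ p.2 < q.2 := by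
  simp only [lt_iff_not_ge, hP q hq p hp]

theorem snd_eq_of_fst_eq (hP : IsOrderEmbeddingGraph P) (hp : p ∈ P) (hq : q ∈ P)
    (h : p.1 = q.1) : p.2 = q.2 :=
  le_antisymm ((hP p hp q hq).1 h.le) ((hP q hq p hp).1 h.ge)

theorem injOn_fst (hP : IsOrderEmbeddingGraph P) : InjOn Prod.fst P :=
  fun _ hp _ hq h => Prod.ext h (hP.snd_eq_of_fst_eq hp hq h)

theorem countable_snd_image (hP : IsOrderEmbeddingGraph P) {C : Set α} (hC : C.Countable) :
    (Prod.snd '' (P ∩ Prod.fst ⁻¹' C)).Countable :=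
  ((mapsTo_preimage _ _).mono_left inter_subset_right |>.countable_of_injOn
    (hP.injOn_fst.mono inter_subset_left) hC).image _

theorem sUnion {c : Set (Set (α × β))} (hc : ∀ P ∈ c, IsOrderEmbeddingGraph P)
    (hchain : IsChain (· ⊆ ·) c) : IsOrderEmbeddingGraph (⋃₀ c) := by
  rintro p ⟨P, hP, hp⟩ q ⟨Q, hQ, hq⟩
  rcases hchain.total hP hQ with h | h
  · exact hc Q hQ p (h hp) q hq
  · exact hc P hP p hp q (h hq)

theorem insert (hP : IsOrderEmbeddingGraph P) {s : α} {t : β} (hs : ∀ q ∈ P, q.1 ≠ s)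
    (ht : ∀ q ∈ P, (q.1 < s → q.2 < t) ∧ (s < q.1 → t < q.2)) :
    IsOrderEmbeddingGraph (insert (s, t) P) := by
  have key : ∀ q ∈ P, (q.1 ≤ s ↔ q.2 ≤ t) ∧ (s ≤ q.1 ↔ t ≤ q.2) := by
    intro q hq
    rcases (hs q hq).lt_or_gt with h | h
    · have h' := (ht q hq).1 h
      exact ⟨iff_of_true h.le h'.le, iff_of_false h.not_ge h'.not_ge⟩
    · have h' := (ht q hq).2 h
      exact ⟨iff_of_false h.not_ge h'.not_ge, iff_of_true h.le h'.le⟩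
  rintro p (rfl | hp) q (rfl | hq)
  · exact iff_of_true le_rfl le_rfl
  · exact (key q hq).2
  · exact (key p hp).1
  · exact hP p hp q hq

theorem exists_orderEmbedding (hP : IsOrderEmbeddingGraph P)
    (htot : ∀ a, ∃ b, (a, b) ∈ P) : ∃ g : α ↪o β, ∀ a, (a, g a) ∈ P := by
  choose g hg using htot
  exact ⟨OrderEmbedding.ofMapLEIff g fun a b => (hP _ (hg a) _ (hg b)).symm, hg⟩

theorem exists_between (hα : IsShortCof α) (hβ : IsEtaOne β) (hP : IsOrderEmbeddingGraph P)
    (s : α) : ∃ t, ∀ q ∈ P, (q.1 < s → q.2 < t) ∧ (s < q.1 → t < q.2) := by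
  obtain ⟨C, hCs, hC, hCcof⟩ := hα.exists_countable_isCofinalFor {a ∈ Prod.fst '' P | a < s}
  obtain ⟨D, hDs, hD, hDcoi⟩ :=
    hα.exists_countable_isCoinitialFor {a ∈ Prod.fst '' P | s < a}
  obtain ⟨t, hCt, htD⟩ := hβ _ _ (hP.countable_snd_image hC) (hP.countable_snd_image hD) <| by
    rintro _ ⟨p, ⟨hp, hpC⟩, rfl⟩ _ ⟨q, ⟨hq, hqD⟩, rfl⟩
    exact (hP.lt_iff hp hq).1 ((hCs hpC).2.trans (hDs hqD).2)
  refine ⟨t, fun q hq => ⟨fun hqs => ?_, fun hsq => ?_⟩⟩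
  · obtain ⟨c, hc, hqc⟩ := hCcof ⟨mem_image_of_mem _ hq, hqs⟩
    obtain ⟨p, hp, rfl⟩ := (hCs hc).1
    exact ((hP q hq p hp).1 hqc).trans_lt (hCt _ ⟨p, ⟨hp, hc⟩, rfl⟩)
  · obtain ⟨d, hd, hdq⟩ := hDcoi ⟨mem_image_of_mem _ hq, hsq⟩
    obtain ⟨p, hp, rfl⟩ := (hDs hd).1
    exact (htD _ ⟨p, ⟨hp, hd⟩, rfl⟩).trans_le ((hP p hp q hq).1 hdq)

theorem exists_mem_of_maximal (hα : IsShortCof α) (hβ : IsEtaOne β)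
    (hP : Maximal IsOrderEmbeddingGraph P) (s : α) : ∃ t, (s, t) ∈ P := by
  by_contra! hs
  obtain ⟨t, ht⟩ := hP.prop.exists_between hα hβ s
  have hsP : ∀ q ∈ P, q.1 ≠ s := fun q hq h => hs q.2 (h ▸ hq)
  exact hs t (hP.mem_of_prop_insert (hP.prop.insert hsP ht))

end IsOrderEmbeddingGraph

end Graph

/-- Any order embedding of a subset of a short linear order `S` into an `η₁`-ordered set `T`
extends to an order embedding of all of `S` into `T`; in particular `S` order-embeds
into `T`. -/
theorem embed_short_into_etaOne {S T : Type*} [LinearOrder S] [LinearOrder T]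
    (hS : IsShortCof S) (hT : IsEtaOne T) :
    (∀ (A : Set S) (f : A ↪o T), ∃ g : S ↪o T, ∀ a : A, g a = f a) ∧
      Nonempty (S ↪o T) := by
  have extend (A : Set S) (f : A ↪o T) : ∃ g : S ↪o T, ∀ a : A, g a = f a := by
    obtain ⟨M, hfM, hM⟩ := zorn_subset_nonempty {P | IsOrderEmbeddingGraph P}
      (fun c hc hchain _ => ⟨⋃₀ c, .sUnion hc hchain, fun _ => subset_sUnion_of_mem⟩)
      _ (isOrderEmbeddingGraph_range f)
    obtain ⟨g, hg⟩ := hM.prop.exists_orderEmbedding (IsOrderEmbeddingGraph.exists_mem_of_maximal hS hT hM)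
    exact ⟨g, fun a => hM.prop.snd_eq_of_fst_eq (hg a) (hfM ⟨a, rfl⟩) rfl⟩
  obtain ⟨g, -⟩ := extend ∅ OrderEmbedding.ofIsEmpty
  exact ⟨extend, ⟨g⟩⟩
end

section
/- Let S be a short linearly ordered set. Then the Hahn product H[S, ℝ] (the ordered abelian group of functions f : S → ℝ with well-ordered support, ordered lexicographically by the least element of the support) is a short linearly ordered set. (Esterle) -/
/-!
Let `(F i)_{i < ω₁}` be strictly increasing in `H[S, ℝ]` and `d i j = min supp (F j - F i)`.
Since differences of an increasing chain are positive, there is no cancellation of leading terms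
and `d i k = min (d i j) (d j k)` for `i < j < k`. Hence `j ↦ d i j` decreases and, as `S` has no
decreasing `ω₁`-chain, stabilizes at some `s i`; then `i ↦ s i` increases and stabilizes at some
`σ`. From there on the coefficients `F i σ` increase in `ℝ`, so they stabilize too, and for large
`i < j` the series `F j - F i` vanishes at its own leading exponent `σ`. Decreasing chains are
increasing chains of `-F`.

Monotone `ω₁`-sequences in an order without `ω₁`-chains are eventually constant because their
jump points form a cofinal subset of `ω₁`, which has order type `ω₁` by regularity of `ℵ₁`.
-/

/-- A relation `r` on `α` is short if there is no `ω₁`-indexed strictly `r`-increasing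
chain and no `ω₁`-indexed strictly `r`-decreasing chain in `α`. For a linear order with
`r = (· < ·)` this says neither `ω₁` nor its reverse order-embeds. -/
def RelShort {α : Type*} (r : α → α → Prop) : Prop :=
  (¬ ∃ f : (Cardinal.aleph.{0} 1).ord.ToType → α, ∀ i j, i < j → r (f i) (f j)) ∧
    (¬ ∃ f : (Cardinal.aleph.{0} 1).ord.ToType → α, ∀ i j, i < j → r (f j) (f i))

/-- `f > 0` in the Hahn product `H[S, ℝ]`: `f ≠ 0` and the coefficient of `f` at the least
element of its support is positive. -/
def HahnPos {S : Type*} [LinearOrder S] (f : HahnSeries S ℝ) : Prop :=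
  ∃ h : f ≠ 0, 0 < f.coeff (f.isWF_support.min (HahnSeries.support_nonempty_iff.2 h))

open Cardinal Filter Order Set HahnSeries

abbrev Ω₁ : Type := (Cardinal.aleph.{0} 1).ord.ToType

instance : Nonempty Ω₁ := Ordinal.nonempty_toType_iff.2 ((ord_pos.2 (aleph_pos 1)).ne')

instance : NoMaxOrder Ω₁ := Cardinal.noMaxOrder (aleph0_le_aleph 1)

theorem not_countable_omega₁ : ¬ Countable Ω₁ := by
  rw [← mk_le_aleph0_iff, mk_ord_toType, not_le]
  exact aleph0_lt_aleph_one

theorem exists_strictMono_mem_of_isCofinal {R : Set Ω₁} (hR : IsCofinal R) :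
    ∃ g : Ω₁ → Ω₁, StrictMono g ∧ ∀ i, g i ∈ R := by
  have hcard : ℵ₁ ≤ #R := by
    simpa [Ordinal.cof_toType, isRegular_aleph_one.cof_ord] using Order.cof_le hR
  have htype : Ordinal.type (α := Ω₁) (· < ·) ≤ Ordinal.type (α := R) (· < ·) := by
    rw [Ordinal.type_toType, ord_le, Ordinal.card_type]
    exact hcard
  obtain ⟨g⟩ := Ordinal.type_le_iff'.1 htype
  exact ⟨fun i => g i, fun i j hij => g.map_rel_iff.2 hij, fun i => (g i).2⟩

theorem Monotone.eventuallyConst_of_not_exists_omega₁_chain {α : Type*} [LinearOrder α]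
    (hα : ¬ ∃ f : Ω₁ → α, ∀ i j, i < j → f i < f j) {v : Ω₁ → α} (hv : Monotone v) :
    atTop.EventuallyConst v := by
  by_contra hconst
  simp only [eventuallyConst_atTop, not_exists, not_forall] at hconst
  have hjump : ∀ i, ∃ j, v i < v j := fun i =>
    let ⟨j, hij, hne⟩ := hconst i; ⟨j, (hv hij).lt_of_ne' hne⟩
  set R : Set Ω₁ := {k | ∀ l < k, v l < v k}
  have hR : IsCofinal R := by
    intro i
    obtain ⟨k, hk, hmin⟩ := wellFounded_lt.has_min {k | v i < v k} (hjump i)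
    refine ⟨k, fun l hlk => ?_, ?_⟩
    · exact (not_lt.1 fun h => hmin l h hlk).trans_lt hk
    · exact le_of_not_gt fun hki => (hv hki.le).not_gt hk
  obtain ⟨g, hg, hgR⟩ := exists_strictMono_mem_of_isCofinal hR
  exact hα ⟨v ∘ g, fun i j hij => hgR j (g i) (hg hij)⟩

theorem MonotoneOn.eventuallyConst_of_not_exists_omega₁_chain {α : Type*} [LinearOrder α]
    (hα : ¬ ∃ f : Ω₁ → α, ∀ i j, i < j → f i < f j) {v : Ω₁ → α} {i₀ : Ω₁}
    (hv : MonotoneOn v (Ici i₀)) : atTop.EventuallyConst v := by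
  have hmax : Monotone fun j => v (max j i₀) := fun j k hjk =>
    hv (mem_Ici.2 (le_max_right _ _)) (mem_Ici.2 (le_max_right _ _)) (max_le_max_right i₀ hjk)
  refine (hmax.eventuallyConst_of_not_exists_omega₁_chain hα).congr ?_
  filter_upwards [eventually_ge_atTop i₀] with j hj
  rw [max_eq_left hj]

theorem AntitoneOn.eventuallyConst_of_not_exists_omega₁_chain {α : Type*} [LinearOrder α]
    (hα : ¬ ∃ f : Ω₁ → α, ∀ i j, i < j → f j < f i) {v : Ω₁ → α} {i₀ : Ω₁}
    (hv : AntitoneOn v (Ici i₀)) : atTop.EventuallyConst v :=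
  MonotoneOn.eventuallyConst_of_not_exists_omega₁_chain (α := αᵒᵈ) hα hv

theorem RelShort.withTop {α : Type*} [LinearOrder α] (h : RelShort ((· < ·) : α → α → Prop)) :
    RelShort ((· < ·) : WithTop α → WithTop α → Prop) := by
  constructor
  · rintro ⟨f, hf⟩
    refine h.1 ⟨fun i => (f i).untop (hf i _ (lt_succ i)).ne_top, fun i j hij => ?_⟩
    simpa only [WithTop.untop_lt_untop_iff] using hf i j hij
  · rintro ⟨f, hf⟩
    refine h.2 ⟨fun i => (f (succ i)).untop (hf i _ (lt_succ i)).ne_top, fun i j hij => ?_⟩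
    simpa only [WithTop.untop_lt_untop_iff] using hf _ _ (succ_strictMono hij)

theorem RelShort.comap {α β : Type*} {r : β → β → Prop} (h : RelShort r) (e : α → β) :
    RelShort fun a b => r (e a) (e b) :=
  ⟨fun ⟨f, hf⟩ => h.1 ⟨e ∘ f, hf⟩, fun ⟨f, hf⟩ => h.2 ⟨e ∘ f, hf⟩⟩

theorem Real.not_exists_omega₁_chain : ¬ ∃ f : Ω₁ → ℝ, ∀ i j, i < j → f i < f j := by
  rintro ⟨f, hf⟩
  replace hf : StrictMono f := fun i j hij => hf i j hij
  choose q hq using fun i => exists_rat_btwn (hf (lt_succ i))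
  have hq_mono : StrictMono q := fun i j hij => by
    exact_mod_cast ((hq i).2.trans_le (hf.monotone (succ_le_of_lt hij))).trans (hq j).1
  exact not_countable_omega₁ hq_mono.injective.countable

namespace HahnSeries

theorem coeff_eq_leadingCoeff_of_orderTop_eq {Γ R : Type*} [PartialOrder Γ] [Zero R]
    {x : R⟦Γ⟧} {g : Γ} (hg : x.orderTop = g) : x.coeff g = x.leadingCoeff := by
  simp [leadingCoeff, hg]

theorem coeff_nonneg_of_le_orderTop {S R : Type*} [LinearOrder S] [Zero R] [LinearOrder R]
    {x : Lex R⟦S⟧} (hx : 0 ≤ x) {t : S} (ht : ↑t ≤ (ofLex x).orderTop) :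
    0 ≤ (ofLex x).coeff t := by
  rcases ht.lt_or_eq with ht | ht
  · rw [coeff_eq_zero_of_lt_orderTop ht]
  · rw [coeff_eq_leadingCoeff_of_orderTop_eq ht.symm]
    exact leadingCoeff_nonneg_iff.2 hx

variable {S R : Type*} [LinearOrder S] [LinearOrder R] [AddCommGroup R] [IsOrderedAddMonoid R]

theorem orderTop_add_of_pos {x y : Lex R⟦S⟧} (hx : 0 < x) (hy : 0 < y) :
    (ofLex (x + y)).orderTop = min (ofLex x).orderTop (ofLex y).orderTop := by
  refine le_antisymm ?_ min_orderTop_le_orderTop_add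
  wlog hxy : (ofLex x).orderTop ≤ (ofLex y).orderTop generalizing x y
  · rw [add_comm, min_comm]
    exact this hy hx (le_of_not_ge hxy)
  obtain ⟨t, ht⟩ := WithTop.ne_top_iff_exists.1 ((orderTop_ne_top (x := ofLex x)).2 hx.ne')
  have hcoeff : 0 < (ofLex (x + y)).coeff t := by
    rw [ofLex_add, coeff_add, coeff_eq_leadingCoeff_of_orderTop_eq ht.symm]
    exact add_pos_of_pos_of_nonneg (leadingCoeff_pos_iff.2 hx)
      (coeff_nonneg_of_le_orderTop hy.le (ht ▸ hxy))
  rw [min_eq_left hxy, ← ht]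
  exact orderTop_le_of_coeff_ne_zero hcoeff.ne'

theorem orderTop_sub_eq_min {x y z : Lex R⟦S⟧} (hxy : x < y) (hyz : y < z) :
    (ofLex (z - x)).orderTop = min (ofLex (y - x)).orderTop (ofLex (z - y)).orderTop := by
  rw [← orderTop_add_of_pos (sub_pos.2 hxy) (sub_pos.2 hyz), sub_add_sub_cancel']

theorem exists_orderTop_sub_eventually_eq (hS : RelShort ((· < ·) : S → S → Prop))
    {F : Ω₁ → Lex R⟦S⟧} (hF : StrictMono F) :
    ∃ σ : WithTop S, ∃ γ : Ω₁, ∀ a, γ ≤ a → (∀ b, a < b → σ ≤ (ofLex (F b - F a)).orderTop) ∧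
      ∀ᶠ b in atTop, (ofLex (F b - F a)).orderTop = σ := by
  set d : Ω₁ → Ω₁ → WithTop S := fun a b => (ofLex (F b - F a)).orderTop
  have hd : ∀ a b c, a < b → b < c → d a c = min (d a b) (d b c) := fun a b c hab hbc =>
    orderTop_sub_eq_min (hF hab) (hF hbc)
  have hlim : ∀ a, ∃ s, ∀ᶠ b in atTop, d a b = s := by
    refine fun a => eventuallyConst_iff_exists_eventuallyEq.1 <|
      AntitoneOn.eventuallyConst_of_not_exists_omega₁_chain hS.withTop.2 (i₀ := succ a)
        fun b hb c _ hbc => ?_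
    rcases hbc.eq_or_lt with rfl | hbc
    · rfl
    · exact (hd a b c ((lt_succ a).trans_le hb) hbc).trans_le (min_le_left _ _)
  choose s hs using hlim
  have hs_min : ∀ a b, a < b → s a = min (d a b) (s b) := fun a b hab => by
    obtain ⟨c, hac, hbc, hbc'⟩ := ((hs a).and ((hs b).and (eventually_gt_atTop b))).exists
    rw [← hac, ← hbc, hd a b c hab hbc']
  have hs_mono : Monotone s := fun a b hab => by
    rcases hab.eq_or_lt with rfl | hab
    · rfl
    · exact (hs_min a b hab).trans_le (min_le_right _ _)
  obtain ⟨σ, hσ⟩ := eventuallyConst_iff_exists_eventuallyEq.1 <|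
    hs_mono.eventuallyConst_of_not_exists_omega₁_chain hS.withTop.1
  obtain ⟨γ, hγ⟩ := eventually_atTop.1 hσ
  refine ⟨σ, γ, fun a ha => ⟨fun b hab => ?_, by simpa only [hγ a ha] using hs a⟩⟩
  have := hs_min a b hab
  rw [hγ a ha, hγ b (ha.trans hab.le)] at this
  exact this.le.trans (min_le_left _ _)

theorem not_exists_omega₁_chain (hS : RelShort ((· < ·) : S → S → Prop))
    (hR : ¬ ∃ f : Ω₁ → R, ∀ i j, i < j → f i < f j) :
    ¬ ∃ F : Ω₁ → Lex R⟦S⟧, ∀ i j, i < j → F i < F j := by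
  rintro ⟨F, hF⟩
  replace hF : StrictMono F := fun i j hij => hF i j hij
  obtain ⟨σ, γ, hσ⟩ := exists_orderTop_sub_eventually_eq hS hF
  obtain ⟨b, hb, hγb⟩ := ((hσ γ le_rfl).2.and (eventually_gt_atTop γ)).exists
  obtain ⟨t, rfl⟩ : ∃ t : S, ↑t = σ := WithTop.ne_top_iff_exists.1 <|
    hb ▸ (orderTop_ne_top (x := ofLex (F b - F γ))).2 (sub_ne_zero.2 (hF hγb).ne')
  have hC : MonotoneOn (fun a => (ofLex (F a)).coeff t) (Ici γ) := fun a ha b _ hab => by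
    rcases hab.eq_or_lt with rfl | hab
    · rfl
    · have := coeff_nonneg_of_le_orderTop (sub_pos.2 (hF hab)).le ((hσ a ha).1 b hab)
      simpa only [ofLex_sub, coeff_sub, sub_nonneg] using this
  obtain ⟨c, hc⟩ := eventuallyConst_iff_exists_eventuallyEq.1 <|
    hC.eventuallyConst_of_not_exists_omega₁_chain hR
  obtain ⟨a, hac, hγa⟩ := (hc.and (eventually_ge_atTop γ)).exists
  obtain ⟨b, hbc, -, hσb⟩ := (hc.and ((eventually_gt_atTop a).and (hσ a hγa).2)).exists
  apply coeff_orderTop_ne hσb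
  simp only [ofLex_sub, coeff_sub] at hac hbc ⊢
  rw [hac, hbc, sub_self]

theorem relShort_lex (hS : RelShort ((· < ·) : S → S → Prop))
    (hR : ¬ ∃ f : Ω₁ → R, ∀ i j, i < j → f i < f j) :
    RelShort ((· < ·) : Lex R⟦S⟧ → Lex R⟦S⟧ → Prop) :=
  ⟨not_exists_omega₁_chain hS hR, fun ⟨F, hF⟩ => not_exists_omega₁_chain hS hR
    ⟨fun i => -F i, fun i j hij => neg_lt_neg (hF i j hij)⟩⟩

end HahnSeries

theorem hahnPos_iff_leadingCoeff_pos {S : Type*} [LinearOrder S] {f : HahnSeries S ℝ} :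
    HahnPos f ↔ 0 < f.leadingCoeff := by
  constructor
  · rintro ⟨hf, hpos⟩
    rwa [leadingCoeff_of_ne_zero hf, untop_orderTop_of_ne_zero hf]
  · intro hpos
    have hf := leadingCoeff_ne_zero.1 hpos.ne'
    rw [leadingCoeff_of_ne_zero hf, untop_orderTop_of_ne_zero hf] at hpos
    exact ⟨hf, hpos⟩

theorem hahnPos_sub_iff {S : Type*} [LinearOrder S] {f g : HahnSeries S ℝ} :
    HahnPos (g - f) ↔ toLex f < toLex g := by
  rw [hahnPos_iff_leadingCoeff_pos, ← sub_pos (a := toLex g), ← toLex_sub,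
    ← HahnSeries.leadingCoeff_pos_iff, ofLex_toLex]

/-- (Esterle) If `S` is a short linear order, then the Hahn product `H[S, ℝ]`, ordered
lexicographically (`f < g` iff `g - f > 0`), is short. -/
theorem hahnProduct_short {S : Type*} [LinearOrder S]
    (hS : RelShort ((· < ·) : S → S → Prop)) :
    RelShort (fun f g : HahnSeries S ℝ => HahnPos (g - f)) := by
  simp_rw [hahnPos_sub_iff]
  exact (HahnSeries.relShort_lex hS Real.not_exists_omega₁_chain).comap toLex
end

section
/- Let Δ ⊆ Γ be an extension of ordered abelian groups. Then Γ is short if and only if Δ is short and the set-theoretic difference [Γ] \ [Δ] of archimedean classes is short. In particular, if rank_ℚ(Γ/Δ) ≤ ℵ₀, then Γ is short iff Δ is short. -/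
/-- `[a] < [b]` for archimedean classes. -/
def archLT {Γ : Type*} [AddCommGroup Γ] [LinearOrder Γ] [IsOrderedAddMonoid Γ] (a b : Γ) : Prop :=
  archLE a b ∧ ¬ archLE b a

/-- The set of representatives of archimedean classes of `Γ` not meeting the
subgroup `Δ`, representing `[Γ] \ [Δ]`. -/
def archDiff {Γ : Type*} [AddCommGroup Γ] [LinearOrder Γ] [IsOrderedAddMonoid Γ] (Δ : AddSubgroup Γ) : Set Γ :=
  {γ : Γ | ∀ δ ∈ Δ, ¬ (archLE γ δ ∧ archLE δ γ)}

/-!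
If `Γ` is short, so are the subgroup `Δ` and any set of representatives of archimedean classes.
Conversely, an `ω₁`-chain of classes has an uncountable subchain of classes of `Δ` (which lifts
to a chain in `Δ`) or of classes outside `[Δ]`, so `[Γ]` is short. A short `[Γ]` makes `Γ` short:
along an increasing `ω₁`-sequence `f`, the class of `f j - f i` stabilises, first in `j` and then
in `i`, at the class of some `r`. From then on each step of `f` is comparable to `r`, so it moves
the cut `{m / n | m • |r| ≤ n • (f i - f i₁)}` in `ℚ`; a monotone `ω₁`-sequence of subsets of a
countable set cannot do that uncountably often. Finally, representatives of distinct classes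
outside `[Δ]` are `ℤ`-independent modulo `Δ`, so `[Γ] \ [Δ]` has at most `rank_ℚ (Γ/Δ)` elements.
-/

open Set

abbrev OmegaOne : Type := (Cardinal.aleph.{0} 1).ord.ToType

namespace OmegaOne

open Cardinal

instance : Nonempty OmegaOne := nonempty_ord_toType (aleph_pos 1).ne'

instance : NoMaxOrder OmegaOne := Cardinal.noMaxOrder aleph0_lt_aleph_one.le

theorem exists_forall_lt_of_countable {s : Set OmegaOne} (hs : s.Countable) :
    ∃ b, ∀ x ∈ s, x < b := by
  by_contra! hcof
  have hle := Order.cof_le (s := s) hcof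
  rw [Ordinal.cof_toType, isRegular_aleph_one.cof_ord] at hle
  exact (aleph0_lt_aleph_one.trans_le hle).not_ge (le_aleph0_iff_set_countable.2 hs)

theorem not_countable : ¬ Countable OmegaOne := fun _ ↦ by
  obtain ⟨b, hb⟩ := exists_forall_lt_of_countable (countable_univ (α := OmegaOne))
  exact lt_irrefl b (hb b (mem_univ b))

theorem exists_strictMono_mem_of_not_countable {s : Set OmegaOne} (hs : ¬ s.Countable) :
    ∃ e : OmegaOne → OmegaOne, StrictMono e ∧ ∀ i, e i ∈ s := by
  have htype : Ordinal.type (α := OmegaOne) (· < ·) ≤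
      Ordinal.type (Subrel (α := OmegaOne) (· < ·) (· ∈ s)) := by
    rw [Ordinal.type_toType, Cardinal.ord_le, Ordinal.card_type]
    exact aleph_one_le_iff.2 (not_le.1 (mt le_aleph0_iff_set_countable.1 hs))
  obtain ⟨f⟩ := Ordinal.type_le_iff'.1 htype
  exact ⟨fun i ↦ (f i).1, fun i j hij ↦ f.map_rel_iff.2 hij, fun i ↦ (f i).2⟩

theorem exists_strictMono_forall_or (p : OmegaOne → Prop) :
    ∃ e : OmegaOne → OmegaOne, StrictMono e ∧ ((∀ i, p (e i)) ∨ ∀ i, ¬ p (e i)) := by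
  by_cases hp : {i | p i}.Countable
  · have hnp : ¬ {i | ¬ p i}.Countable := fun hnp ↦ not_countable <| countable_univ_iff.1 <|
      (hp.union hnp).mono fun i _ ↦ em (p i)
    obtain ⟨e, he, hep⟩ := exists_strictMono_mem_of_not_countable hnp
    exact ⟨e, he, .inr hep⟩
  · obtain ⟨e, he, hep⟩ := exists_strictMono_mem_of_not_countable hp
    exact ⟨e, he, .inl hep⟩

theorem exists_forall_ge_eq_of_monotone_set {β : Type*} [Countable β] {s : OmegaOne → Set β}
    (hs : Monotone s) : ∃ i₀, ∀ j, i₀ ≤ j → s j = s i₀ := by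
  choose! birth hbirth using fun x (hx : x ∈ ⋃ i, s i) ↦ mem_iUnion.1 hx
  obtain ⟨b, hb⟩ := exists_forall_lt_of_countable (countable_range birth)
  refine ⟨b, fun j hj ↦ Subset.antisymm (fun x hx ↦ ?_) (hs hj)⟩
  exact hs (hb _ (mem_range_self x)).le (hbirth x (mem_iUnion.2 ⟨j, hx⟩))

end OmegaOne

open OmegaOne

namespace RelShort

variable {α β : Type*}

theorem comap_s15 {r : α → α → Prop} {s : β → β → Prop} (hs : RelShort s) (f : α → β)
    (hf : ∀ a b, r a b → s (f a) (f b)) : RelShort r :=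
  ⟨fun ⟨g, hg⟩ ↦ hs.1 ⟨f ∘ g, fun i j hij ↦ hf _ _ (hg i j hij)⟩,
    fun ⟨g, hg⟩ ↦ hs.2 ⟨f ∘ g, fun i j hij ↦ hf _ _ (hg i j hij)⟩⟩

theorem subtype [Preorder α] (h : RelShort ((· < ·) : α → α → Prop)) (p : α → Prop) :
    RelShort ((· < ·) : Subtype p → Subtype p → Prop) :=
  h.comap_s15 Subtype.val fun _ _ ↦ id

theorem flip {r : α → α → Prop} (h : RelShort r) : RelShort (_root_.flip r) := ⟨h.2, h.1⟩

theorem of_countable [Preorder α] [Countable α] : RelShort ((· < ·) : α → α → Prop) :=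
  ⟨fun ⟨_, hf⟩ ↦ not_countable (StrictMono.injective hf).countable,
    fun ⟨_, hf⟩ ↦ not_countable (StrictAnti.injective hf).countable⟩

private theorem not_exists_chain_of_subtype {r : α → α → Prop} (p : α → Prop)
    (h₁ : ¬ ∃ f : OmegaOne → {x // p x}, ∀ i j, i < j → r (f i) (f j))
    (h₂ : ¬ ∃ f : OmegaOne → {x // ¬ p x}, ∀ i j, i < j → r (f i) (f j)) :
    ¬ ∃ f : OmegaOne → α, ∀ i j, i < j → r (f i) (f j) := by
  rintro ⟨f, hf⟩
  obtain ⟨e, he, hp | hp⟩ := exists_strictMono_forall_or (p ∘ f)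
  · exact h₁ ⟨fun i ↦ ⟨f (e i), hp i⟩, fun i j hij ↦ hf _ _ (he hij)⟩
  · exact h₂ ⟨fun i ↦ ⟨f (e i), hp i⟩, fun i j hij ↦ hf _ _ (he hij)⟩

theorem of_subtype {r : α → α → Prop} (p : α → Prop)
    (h₁ : RelShort fun a b : {x // p x} ↦ r a b) (h₂ : RelShort fun a b : {x // ¬ p x} ↦ r a b) :
    RelShort r :=
  ⟨not_exists_chain_of_subtype p h₁.1 h₂.1,
    not_exists_chain_of_subtype (r := _root_.flip r) p h₁.2 h₂.2⟩

theorem exists_forall_ge_eq_of_monotone [LinearOrder β] (hβ : RelShort ((· < ·) : β → β → Prop))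
    {g : OmegaOne → β} (hg : Monotone g) : ∃ i₀, ∀ j, i₀ ≤ j → g j = g i₀ := by
  have hrecords : {i | ∀ k < i, g k < g i}.Countable := by
    by_contra hunc
    obtain ⟨e, he, hrec⟩ := exists_strictMono_mem_of_not_countable hunc
    exact hβ.1 ⟨g ∘ e, fun i j hij ↦ hrec j (e i) (he hij)⟩
  obtain ⟨b, hb⟩ := exists_forall_lt_of_countable hrecords
  refine ⟨b, fun j hbj ↦ (hg hbj).antisymm' (not_lt.1 fun hlt ↦ ?_)⟩
  obtain ⟨k, hk, hkmin⟩ := wellFounded_lt.has_min {k | g b < g k} ⟨j, hlt⟩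
  have hk_record : ∀ m < k, g m < g k := fun m hm ↦ (not_lt.1 (hkmin m · hm)).trans_lt hk
  exact hk.not_ge (hg (hb k hk_record).le)

theorem exists_forall_ge_eq_of_antitone [LinearOrder β] (hβ : RelShort ((· < ·) : β → β → Prop))
    {g : OmegaOne → β} (hg : Antitone g) : ∃ i₀, ∀ j, i₀ ≤ j → g j = g i₀ :=
  exists_forall_ge_eq_of_monotone (β := βᵒᵈ) ⟨hβ.2, hβ.1⟩ hg.dual_right

end RelShort

open ArchimedeanClass

section

variable {Γ : Type*} [AddCommGroup Γ] [LinearOrder Γ] [IsOrderedAddMonoid Γ]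

-- Mathlib orders archimedean classes reversely: larger elements have smaller classes.
theorem archLE_iff_mk_le_mk {a b : Γ} : archLE a b ↔ mk b ≤ mk a := by
  rw [mk_le_mk]
  refine ⟨fun ⟨n, _, h⟩ ↦ ⟨n, h⟩, fun ⟨n, h⟩ ↦ ⟨n + 1, n.succ_pos, ?_⟩⟩
  exact h.trans (nsmul_le_nsmul_left (abs_nonneg b) n.le_succ)

theorem archLT_iff_mk_lt_mk {a b : Γ} : archLT a b ↔ mk b < mk a := by
  rw [archLT, archLE_iff_mk_le_mk, archLE_iff_mk_le_mk, lt_iff_le_not_ge]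

theorem mem_archDiff_iff {Δ : AddSubgroup Γ} {a : Γ} :
    a ∈ archDiff Δ ↔ mk a ∉ mk '' (Δ : Set Γ) := by
  simp only [archDiff, archLE_iff_mk_le_mk, ← le_antisymm_iff, mem_ofPred_eq, mem_image,
    SetLike.mem_coe, not_exists, not_and, eq_comm]

theorem ArchimedeanClass.abs_lt_abs_of_mk_lt_mk {a b : Γ} (h : mk a < mk b) : |b| < |a| :=
  lt_of_mk_lt_mk_of_nonneg (by simpa only [mk_abs] using h) (abs_nonneg a)

namespace RelShort

theorem archDiff (h : RelShort ((· < ·) : Γ → Γ → Prop)) (Δ : AddSubgroup Γ) :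
    RelShort fun a b : archDiff Δ ↦ archLT a.1 b.1 :=
  h.comap_s15 (fun a ↦ |a.1|) fun _ _ hab ↦ abs_lt_abs_of_mk_lt_mk (archLT_iff_mk_lt_mk.1 hab)

theorem compl_image_mk {Δ : AddSubgroup Γ}
    (h : RelShort fun a b : _root_.archDiff Δ ↦ archLT a.1 b.1) :
    RelShort ((· < ·) : ↥(mk '' (Δ : Set Γ))ᶜ → _ → Prop) :=
  (h.comap_s15 (r := _root_.flip (· < ·))
    (fun A ↦ ⟨A.1.out, mem_archDiff_iff.2 (by rw [mk_out]; exact A.2)⟩)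
    fun _ _ hAB ↦ archLT_iff_mk_lt_mk.2 (by rwa [mk_out, mk_out])).flip

theorem archimedeanClass {Δ : AddSubgroup Γ} (hΔ : RelShort ((· < ·) : Δ → Δ → Prop))
    (hC : RelShort ((· < ·) : ↥(mk '' (Δ : Set Γ))ᶜ → _ → Prop)) :
    RelShort ((· < ·) : ArchimedeanClass Γ → _ → Prop) := by
  refine of_subtype (· ∈ mk '' (Δ : Set Γ)) ?_ hC
  choose δ hδΔ hδ using fun A : {A // A ∈ mk '' (Δ : Set Γ)} ↦ A.2
  refine hΔ.flip.comap_s15 (fun A ↦ ⟨|δ A|, abs_mem_iff.2 (hδΔ A)⟩) fun A B hAB ↦ ?_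
  exact abs_lt_abs_of_mk_lt_mk (a := δ A) (by rwa [hδ, hδ])

end RelShort

theorem ArchimedeanClass.not_forall_exists_mk_sub_le {r : Γ} (hr : r ≠ 0) {g : OmegaOne → Γ}
    (hg : Monotone g) (hbdd : ∀ i, mk r ≤ mk (g i)) :
    ¬ ∀ i, ∃ j, i ≤ j ∧ mk (g j - g i) ≤ mk r := by
  intro hjump
  have hr' : 0 < |r| := abs_pos.2 hr
  let cut : OmegaOne → Set (ℤ × ℕ) := fun i ↦ {p | p.1 • |r| ≤ p.2 • g i}
  have hcut : Monotone cut := fun i j hij p hp ↦ hp.trans (nsmul_le_nsmul_right (hg hij) _)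
  obtain ⟨i₀, hi₀⟩ := exists_forall_ge_eq_of_monotone_set hcut
  obtain ⟨j, hij, hj⟩ := hjump i₀
  obtain ⟨n, hn⟩ := mk_le_mk.1 hj
  rw [abs_of_nonneg (sub_nonneg.2 (hg hij))] at hn
  obtain ⟨N, hN⟩ := mk_le_mk.1 (hbdd i₀)
  have hbound : n • |g i₀| ≤ ((n * N : ℕ) : ℤ) • |r| := by
    rw [natCast_zsmul, mul_nsmul']
    exact nsmul_le_nsmul_right hN n
  obtain ⟨m, hm, hmax⟩ := Int.exists_greatest_of_bdd (P := fun m : ℤ ↦ m • |r| ≤ n • g i₀)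
    ⟨n * N, fun z hz ↦ (zsmul_le_zsmul_iff_left hr').1
      (hz.trans ((nsmul_le_nsmul_right (le_abs_self _) n).trans hbound))⟩
    ⟨-(n * N : ℕ), by
      rw [neg_zsmul, neg_le, ← smul_neg]
      exact (nsmul_le_nsmul_right (neg_le_abs _) n).trans hbound⟩
  -- the jump from `g i₀` to `g j` puts `(m + 1) / n` into the cut
  have hnext : (m + 1, n) ∈ cut j :=
    calc (m + 1) • |r| = m • |r| + |r| := add_one_zsmul ..
      _ ≤ n • g i₀ + n • (g j - g i₀) := add_le_add hm hn
      _ = n • g j := by rw [← nsmul_add, add_sub_cancel]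
  rw [hi₀ j hij] at hnext
  exact (hmax _ hnext).not_gt (lt_add_one m)

theorem exists_forall_ge_mk_sub_eq (hcl : RelShort ((· < ·) : ArchimedeanClass Γ → _ → Prop))
    {f : OmegaOne → Γ} (hf : StrictMono f) (i : OmegaOne) :
    ∃ s, i < s ∧ ∀ j, s ≤ j → mk (f j - f i) = mk (f s - f i) := by
  obtain ⟨s₀, hs₀⟩ := exists_gt i
  have hpos : ∀ j, 0 ≤ f (max j s₀) - f i := fun j ↦
    sub_nonneg.2 (hf.monotone (hs₀.le.trans (le_max_right _ _)))
  have hanti : Antitone fun j ↦ mk (f (max j s₀) - f i) := fun j k hjk ↦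
    mk_antitoneOn (hpos j) (hpos k) (sub_le_sub_right (hf.monotone (max_le_max_right s₀ hjk)) _)
  obtain ⟨i₀, hi₀⟩ := hcl.exists_forall_ge_eq_of_antitone hanti
  refine ⟨max i₀ s₀, hs₀.trans_le (le_max_right _ _), fun j hj ↦ ?_⟩
  have hj' := hi₀ j (le_of_max_le_left hj)
  have hs' := hi₀ (max i₀ s₀) (le_max_left _ _)
  rw [max_eq_left (le_of_max_le_right hj)] at hj'
  rw [max_eq_left (le_max_right i₀ s₀)] at hs'
  rw [hj', hs']

theorem not_strictMono_of_relShort_archimedeanClass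
    (hcl : RelShort ((· < ·) : ArchimedeanClass Γ → _ → Prop)) (f : OmegaOne → Γ) :
    ¬ StrictMono f := by
  intro hf
  choose σ hσ hσeq using exists_forall_ge_mk_sub_eq hcl hf
  have hmono : Monotone fun i ↦ mk (f (σ i) - f i) := fun i i' hii' ↦ by
    dsimp only
    rw [← hσeq i _ (le_max_left (σ i) (σ i')), ← hσeq i' _ (le_max_right (σ i) (σ i'))]
    exact mk_antitoneOn (sub_nonneg.2 (hf.monotone ((hσ i').le.trans (le_max_right _ _))))
      (sub_nonneg.2 (hf.monotone ((hii'.trans (hσ i').le).trans (le_max_right _ _))))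
      (sub_le_sub_left (hf.monotone hii') _)
  obtain ⟨i₁, hi₁⟩ := hcl.exists_forall_ge_eq_of_monotone hmono
  have hgpos : ∀ i, 0 ≤ f (max i i₁) - f i₁ := fun i ↦
    sub_nonneg.2 (hf.monotone (le_max_right _ _))
  refine not_forall_exists_mk_sub_le (r := f (σ i₁) - f i₁) (sub_ne_zero.2 (hf (hσ i₁)).ne')
    (g := fun i ↦ f (max i i₁) - f i₁)
    (fun _ _ hij ↦ sub_le_sub_right (hf.monotone (max_le_max_right i₁ hij)) _)
    (fun i ↦ ?_) fun i ↦ ?_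
  · rw [← hσeq i₁ _ (le_max_left (σ i₁) (max i i₁))]
    exact mk_antitoneOn (hgpos i)
      (sub_nonneg.2 (hf.monotone ((hσ i₁).le.trans (le_max_left _ _))))
      (sub_le_sub_right (hf.monotone (le_max_right _ _)) _)
  · refine ⟨σ (max i i₁), (le_max_left i i₁).trans (hσ _).le, le_of_eq ?_⟩
    rw [max_eq_left ((le_max_right i i₁).trans (hσ _).le), sub_sub_sub_cancel_right,
      hi₁ _ (le_max_right i i₁)]

theorem RelShort.of_archimedeanClass (hcl : RelShort ((· < ·) : ArchimedeanClass Γ → _ → Prop)) :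
    RelShort ((· < ·) : Γ → Γ → Prop) :=
  ⟨fun ⟨f, hf⟩ ↦ not_strictMono_of_relShort_archimedeanClass hcl f hf,
    fun ⟨f, hf⟩ ↦ not_strictMono_of_relShort_archimedeanClass hcl (-f)
      fun _ _ hij ↦ neg_lt_neg (hf _ _ hij)⟩

namespace ArchimedeanClass

theorem linearIndependent_mk_out (Δ : AddSubgroup Γ) :
    LinearIndependent ℤ fun A : ↥(mk '' (Δ : Set Γ))ᶜ ↦ (A.1.out : Γ ⧸ Δ) := by
  classical
  rw [linearIndependent_iff']
  intro s c hsum A hA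
  by_contra hcA
  let t := s.filter (c · ≠ 0)
  have ht : t.Nonempty := ⟨A, Finset.mem_filter.2 ⟨hA, hcA⟩⟩
  have hmk : ∀ B ∈ t, mk (c B • B.1.out) = B :=
    fun B hB ↦ (mk_smul _ (Finset.mem_filter.1 hB).2).trans (mk_out _)
  have hmem : ∑ B ∈ t, c B • B.1.out ∈ Δ := by
    rw [← QuotientAddGroup.eq_zero_iff, QuotientAddGroup.mk_sum]
    simp_rw [QuotientAddGroup.mk_zsmul]
    rwa [Finset.sum_filter_of_ne fun B _ h ↦ left_ne_zero_of_smul h]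
  have hmin := mk_sum ht (a := fun B ↦ c B • B.1.out) fun B hB B' hB' h ↦ by
    simpa only [Function.comp_apply, hmk B hB, hmk B' hB', Subtype.coe_lt_coe] using h
  exact (t.min' ht).2 ⟨_, hmem, hmin.trans (hmk _ (t.min'_mem ht))⟩

theorem countable_compl_image_mk {Δ : AddSubgroup Γ}
    (hrank : Module.rank ℚ (TensorProduct ℤ ℚ (Γ ⧸ Δ)) ≤ Cardinal.aleph0) :
    (mk '' (Δ : Set Γ))ᶜ.Countable := by
  have hli := (linearIndependent_mk_out Δ).of_isLocalizedModule ℚ (nonZeroDivisors ℤ)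
    (TensorProduct.mk ℤ ℚ (Γ ⧸ Δ) 1)
  exact countable_coe_iff.1 (Cardinal.mk_le_aleph0_iff.1 (hli.cardinal_le_rank.trans hrank))

end ArchimedeanClass

end

/-- Let `Δ ⊆ Γ` be an extension of ordered abelian groups. Then `Γ` is short iff `Δ` and
the difference `[Γ] \ [Δ]` of archimedean classes are short. In particular, if
`rank_ℚ(Γ/Δ) ≤ ℵ₀`, then `Γ` is short iff `Δ` is short. -/
theorem short_oag_extension {Γ : Type*} [AddCommGroup Γ] [LinearOrder Γ] [IsOrderedAddMonoid Γ] (Δ : AddSubgroup Γ) :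
    (RelShort ((· < ·) : Γ → Γ → Prop) ↔
      (RelShort ((· < ·) : Δ → Δ → Prop) ∧
        RelShort (fun a b : archDiff Δ => archLT a.1 b.1))) ∧
    (Module.rank ℚ (TensorProduct ℤ ℚ (Γ ⧸ Δ)) ≤ Cardinal.aleph0 →
      (RelShort ((· < ·) : Γ → Γ → Prop) ↔ RelShort ((· < ·) : Δ → Δ → Prop))) := by
  have of_parts (hΔ : RelShort ((· < ·) : Δ → Δ → Prop))
      (hC : RelShort ((· < ·) : ↥(mk '' (Δ : Set Γ))ᶜ → _ → Prop)) :
      RelShort ((· < ·) : Γ → Γ → Prop) :=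
    .of_archimedeanClass (.archimedeanClass hΔ hC)
  refine ⟨⟨fun h ↦ ⟨h.subtype _, h.archDiff Δ⟩, fun ⟨hΔ, hD⟩ ↦ of_parts hΔ hD.compl_image_mk⟩,
    fun hrank ↦ ⟨fun h ↦ h.subtype _, fun hΔ ↦ of_parts hΔ ?_⟩⟩
  have := (countable_compl_image_mk hrank).to_subtype
  exact .of_countable
end

section
/- Let K be an ordered field equipped with a convex valuation v with value group Γ, whose residue field is archimedean. Then K is short as a linearly ordered set if and only if Γ is short. -/
universe u

/-! A positive section of `v` reverses the order, so long chains in `Γ` give long chains in `K`.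
Conversely, let `x` be an `ω₁`-chain in `K`. For each `i` the valuations `v (x j - x i)` decrease
in `j`, so they stabilise at some `β i` because `Γ` has no decreasing `ω₁`-chain; `β` is monotone,
hence eventually equal to some `γ`. A subsequence then has all pairwise differences of valuation
`γ`; rescaled to valuation `0` they are bounded above and below by naturals (the residue field is
archimedean), so a rational fits between consecutive terms, and `ω₁` would inject into `ℚ`.

Of `ω₁` only this is used: it is well ordered without maximum, and its countable subsets are
exactly its bounded ones. -/

open Cardinal Filter Set

theorem RelShort.of_strictAnti {α β : Type*} [Preorder α] [Preorder β] {s : α → β}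
    (hs : StrictAnti s) (h : RelShort ((· < ·) : β → β → Prop)) :
    RelShort ((· < ·) : α → α → Prop) :=
  ⟨fun ⟨f, hf⟩ => h.2 ⟨s ∘ f, hs.comp_strictMono hf⟩,
    fun ⟨f, hf⟩ => h.1 ⟨s ∘ f, hs.comp (show StrictAnti f from hf)⟩⟩

theorem countable_iff_bddAbove_omegaOne (s : Set (aleph.{0} 1).ord.ToType) :
    s.Countable ↔ BddAbove s := by
  constructor
  · intro hs
    have := Cardinal.noMaxOrder (aleph0_le_aleph 1)
    by_contra hbdd
    have hcof := Order.cof_le (not_bddAbove_iff_isCofinal.1 hbdd)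
    rw [Ordinal.cof_toType, isRegular_aleph_one.cof_ord] at hcof
    exact (hcof.trans (le_aleph0_iff_set_countable.2 hs)).not_gt aleph0_lt_aleph_one
  · rintro ⟨b, hb⟩
    have hIio : (Iio b).Countable :=
      le_aleph0_iff_set_countable.1 (lt_aleph_one_iff.1 (by simpa using mk_Iio_lt b))
    exact (Iio_insert (a := b) ▸ hIio.insert b).mono hb

instance : Nonempty (aleph.{0} 1).ord.ToType :=
  Ordinal.nonempty_toType_iff.2 isRegular_aleph_one.ord_pos.ne'

section OmegaOneLike

variable {ι : Type*} [LinearOrder ι] [WellFoundedLT ι] [NoMaxOrder ι] [Nonempty ι]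

theorem exists_strictMono_forall_lt_imp (hι : ∀ s : Set ι, s.Countable ↔ BddAbove s) (a : ι)
    {Q : ι → ι → Prop} (hQ : ∀ i, ∀ᶠ j in atTop, Q i j) :
    ∃ g : ι → ι, StrictMono g ∧ (∀ i, a < g i) ∧ ∀ i j, i < j → Q (g i) (g j) := by
  choose N hN using fun i => eventually_atTop.1 (hQ i)
  have hub : ∀ s : Set ι, ∃ b, s.Countable → ∀ x ∈ s, x < b := by
    intro s
    by_cases hs : s.Countable
    · obtain ⟨c, hc⟩ := (hι s).1 hs
      obtain ⟨b, hcb⟩ := exists_gt c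
      exact ⟨b, fun _ x hx => (hc hx).trans_lt hcb⟩
    · exact ⟨a, fun h => absurd h hs⟩
  choose ub hub using hub
  let g : ι → ι :=
    WellFoundedLT.fix fun j g => ub (insert a (⋃ (i) (h : i < j), {g i h, N (g i h)}))
  have hg : ∀ j, g j = ub (insert a (⋃ (i) (_ : i < j), {g i, N (g i)})) :=
    WellFoundedLT.fix_eq _
  have hgt : ∀ j, ∀ x ∈ insert a (⋃ (i) (_ : i < j), {g i, N (g i)}), x < g j := by
    intro j
    rw [hg j]
    refine hub _ (Countable.insert _ (Countable.biUnion ?_ fun i _ => toFinite _ |>.countable))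
    exact (hι _).2 bddAbove_Iio
  refine ⟨g, fun i j hij => ?_, fun j => hgt j a (mem_insert _ _), fun i j hij => ?_⟩
  · exact hgt j (g i) (mem_insert_of_mem _ (mem_biUnion hij (mem_insert _ _)))
  · exact hN _ _ (hgt j _ (mem_insert_of_mem _ (mem_biUnion hij (mem_insert_of_mem _ rfl)))).le

theorem exists_eventually_eq_of_eventually_antitone {Γ : Type*} [PartialOrder Γ]
    (hι : ∀ s : Set ι, s.Countable ↔ BddAbove s) (hΓ : ¬∃ f : ι → Γ, StrictAnti f) {f : ι → Γ}
    (hf : ∀ᶠ i in atTop, ∀ j, i ≤ j → f j ≤ f i) : ∃ c, ∀ᶠ j in atTop, f j = c := by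
  obtain ⟨a, ha⟩ := eventually_atTop.1 hf
  by_contra! hne
  have hdrop : ∀ i, ∀ᶠ j in atTop, a ≤ i → f j < f i := by
    intro i
    by_cases hai : a ≤ i
    · obtain ⟨k, hik, hk⟩ := frequently_atTop.1 (hne (f i)) i
      filter_upwards [eventually_ge_atTop k] with j hkj _
      exact (ha k (hai.trans hik) j hkj).trans_lt ((ha i hai k hik).lt_of_ne hk)
    · exact Eventually.of_forall fun _ h => absurd h hai
  obtain ⟨g, -, hag, hg⟩ := exists_strictMono_forall_lt_imp hι a hdrop
  exact hΓ ⟨f ∘ g, fun i j hij => hg i j hij (hag i).le⟩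

end OmegaOneLike

theorem exists_rat_btwn_of_abs_lt {K : Type*} [Field K] [LinearOrder K] [IsStrictOrderedRing K]
    {a b : K} {n m : ℕ} (ha : |a| < n) (hab : 1 < (b - a) * m) :
    ∃ q : ℚ, a < q ∧ (q : K) < b := by
  have hm : (0 : K) < m := Nat.cast_pos.2 <| Nat.pos_of_ne_zero fun h => by norm_num [h] at hab
  obtain ⟨han, hap⟩ := abs_lt.1 ha
  -- `q = k / m - n` for the least `k` with `(a + n) * m < k`.
  have hex : ∃ k : ℕ, (a + n) * m < k := ⟨2 * n * m, by push_cast; nlinarith⟩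
  classical
  set k := Nat.find hex
  have hk : (a + n) * m < k := Nat.find_spec hex
  have hk0 : k ≠ 0 := by
    intro h
    rw [h, Nat.cast_zero] at hk
    nlinarith
  have hk1 : ((k - 1 : ℕ) : K) ≤ (a + n) * m := not_lt.1 (Nat.find_min hex (by omega))
  rw [Nat.cast_sub (Nat.one_le_iff_ne_zero.2 hk0), Nat.cast_one] at hk1
  refine ⟨k / m - n, ?_, ?_⟩
  · push_cast
    rw [lt_sub_iff_add_lt, lt_div_iff₀ hm]
    exact hk
  · push_cast
    rw [sub_lt_iff_lt_add, div_lt_iff₀ hm]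
    nlinarith

section Valuation

variable {K Γ : Type*} [Field K] {v : K → Γ}

section Group

variable [AddCommGroup Γ]

theorem map_one_of_map_mul (hmul : ∀ x y : K, x ≠ 0 → y ≠ 0 → v (x * y) = v x + v y) :
    v 1 = 0 := by
  simpa using hmul 1 1 one_ne_zero one_ne_zero

theorem map_inv_of_map_mul (hmul : ∀ x y : K, x ≠ 0 → y ≠ 0 → v (x * y) = v x + v y)
    {x : K} (hx : x ≠ 0) : v x⁻¹ = -v x := by
  have h := hmul x x⁻¹ hx (inv_ne_zero hx)
  rw [mul_inv_cancel₀ hx, map_one_of_map_mul hmul] at h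
  exact (neg_eq_of_add_eq_zero_right h.symm).symm

theorem map_div_of_map_mul (hmul : ∀ x y : K, x ≠ 0 → y ≠ 0 → v (x * y) = v x + v y)
    {x y : K} (hx : x ≠ 0) (hy : y ≠ 0) : v (x / y) = v x - v y := by
  rw [div_eq_mul_inv, hmul x y⁻¹ hx (inv_ne_zero hy), map_inv_of_map_mul hmul hy, sub_eq_add_neg]

end Group

variable [LinearOrder K] [IsStrictOrderedRing K]

theorem exists_strictAnti_section [LinearOrder Γ] (hneg : ∀ x : K, x ≠ 0 → v (-x) = v x)
    (hconv : ∀ x y : K, 0 < x → x ≤ y → v y ≤ v x) (hsurj : ∀ γ : Γ, ∃ x : K, x ≠ 0 ∧ v x = γ) :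
    ∃ s : Γ → K, StrictAnti s := by
  have hpos : ∀ γ : Γ, ∃ x : K, 0 < x ∧ v x = γ := by
    intro γ
    obtain ⟨x, hx, rfl⟩ := hsurj γ
    rcases hx.lt_or_gt with h | h
    · exact ⟨-x, neg_pos.2 h, hneg x hx⟩
    · exact ⟨x, h, rfl⟩
  choose s hs hsv using hpos
  refine ⟨s, fun γ δ hγδ => lt_of_not_ge fun h => hγδ.not_ge ?_⟩
  simpa only [hsv] using hconv _ _ (hs γ) h

variable [AddCommGroup Γ] [LinearOrder Γ]

theorem exists_abs_lt_natCast (hneg : ∀ x : K, x ≠ 0 → v (-x) = v x)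
    (hres : ∀ x : K, (x = 0 ∨ 0 ≤ v x) → ∃ n : ℕ, x < (n : K))
    {x : K} (hx : x = 0 ∨ 0 ≤ v x) : ∃ n : ℕ, |x| < n := by
  have hx' : -x = 0 ∨ 0 ≤ v (-x) := by
    rcases eq_or_ne x 0 with h | h
    · simp [h]
    · exact Or.inr (hneg x h ▸ hx.resolve_left h)
  obtain ⟨n₁, hn₁⟩ := hres x hx
  obtain ⟨n₂, hn₂⟩ := hres (-x) hx'
  refine ⟨n₁ + n₂, abs_lt.2 ⟨?_, ?_⟩⟩ <;> push_cast <;>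
    linarith [n₁.cast_nonneg (α := K), n₂.cast_nonneg (α := K)]

theorem exists_one_lt_mul_natCast (hmul : ∀ x y : K, x ≠ 0 → y ≠ 0 → v (x * y) = v x + v y)
    (hres : ∀ x : K, (x = 0 ∨ 0 ≤ v x) → ∃ n : ℕ, x < (n : K))
    {t : K} (ht : 0 < t) (hvt : v t = 0) : ∃ m : ℕ, 1 < t * m := by
  obtain ⟨m, hm⟩ := hres t⁻¹ (Or.inr (by rw [map_inv_of_map_mul hmul ht.ne', hvt, neg_zero]))
  exact ⟨m, by simpa [ht.ne'] using mul_lt_mul_of_pos_left hm ht⟩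

theorem countable_of_strictMono_of_map_sub_eq {α : Type*} [LinearOrder α] [SuccOrder α]
    [NoMaxOrder α] (hneg : ∀ x : K, x ≠ 0 → v (-x) = v x)
    (hmul : ∀ x y : K, x ≠ 0 → y ≠ 0 → v (x * y) = v x + v y)
    (hres : ∀ x : K, (x = 0 ∨ 0 ≤ v x) → ∃ n : ℕ, x < (n : K))
    {y : α → K} (hy : StrictMono y) {γ : Γ} (hγ : ∀ i j, i < j → v (y j - y i) = γ) :
    Countable α := by
  rcases isEmpty_or_nonempty α with _ | ⟨⟨i₀⟩⟩
  · infer_instance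
  set e := y (Order.succ i₀) - y i₀
  have he : 0 < e := sub_pos.2 (hy (Order.lt_succ i₀))
  have hve : v e = γ := hγ _ _ (Order.lt_succ i₀)
  set z : α → K := fun i => (y i - y i₀) / e
  have hz : StrictMono z := fun i j hij => div_lt_div_of_pos_right (by linarith [hy hij]) he
  have hz_sub : ∀ i j, i < j → v (z j - z i) = 0 := by
    intro i j hij
    rw [← sub_div, sub_sub_sub_cancel_right,
      map_div_of_map_mul hmul (sub_pos.2 (hy hij)).ne' he.ne', hγ i j hij, hve, sub_self]
  have hz_bdd : ∀ i, ∃ n : ℕ, |z i| < n := by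
    intro i
    refine exists_abs_lt_natCast hneg hres ?_
    have hzi₀ : z i₀ = 0 := by simp [z]
    rcases lt_trichotomy i i₀ with h | rfl | h
    · have := hz_sub i i₀ h
      rw [hzi₀, zero_sub, hneg _ ((hz h).trans_eq hzi₀).ne] at this
      exact Or.inr this.ge
    · exact Or.inl hzi₀
    · have := hz_sub i₀ i h
      rw [hzi₀, sub_zero] at this
      exact Or.inr this.ge
  have hq : ∀ i, ∃ q : ℚ, z i < q ∧ (q : K) < z (Order.succ i) := by
    intro i
    obtain ⟨n, hn⟩ := hz_bdd i
    obtain ⟨m, hm⟩ := exists_one_lt_mul_natCast hmul hres (sub_pos.2 (hz (Order.lt_succ i)))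
      (hz_sub _ _ (Order.lt_succ i))
    exact exists_rat_btwn_of_abs_lt hn hm
  choose q hq using hq
  have hq_mono : StrictMono q := fun i j hij => by
    exact_mod_cast (hq i).2.trans_le (hz.monotone (Order.succ_le_of_lt hij)) |>.trans (hq j).1
  exact hq_mono.injective.countable

theorem not_exists_strictMono_of_not_exists_strictAnti [IsOrderedAddMonoid Γ]
    {ι : Type*} [LinearOrder ι] [WellFoundedLT ι] [NoMaxOrder ι] [Nonempty ι]
    (hι : ∀ s : Set ι, s.Countable ↔ BddAbove s)
    (hneg : ∀ x : K, x ≠ 0 → v (-x) = v x)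
    (hmul : ∀ x y : K, x ≠ 0 → y ≠ 0 → v (x * y) = v x + v y)
    (hconv : ∀ x y : K, 0 < x → x ≤ y → v y ≤ v x)
    (hres : ∀ x : K, (x = 0 ∨ 0 ≤ v x) → ∃ n : ℕ, x < (n : K))
    (hΓ : ¬∃ f : ι → Γ, StrictAnti f) : ¬∃ x : ι → K, StrictMono x := by
  rintro ⟨x, hx⟩
  have hv_le : ∀ {i i' j j'}, i ≤ i' → i' < j → j ≤ j' → v (x j' - x i) ≤ v (x j - x i') :=
    fun hii' hi'j hjj' =>
      hconv _ _ (sub_pos.2 (hx hi'j)) (by linarith [hx.monotone hii', hx.monotone hjj'])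
  have hstab : ∀ i, ∃ c, ∀ᶠ j in atTop, v (x j - x i) = c := fun i =>
    exists_eventually_eq_of_eventually_antitone hι hΓ <| by
      filter_upwards [eventually_gt_atTop i] with k hik j hkj
      exact hv_le le_rfl hik hkj
  choose β hβ using hstab
  have hβ_mono : Monotone β := fun i i' hii' => by
    obtain ⟨j, hj, hj', hi'j⟩ := ((hβ i).and ((hβ i').and (eventually_gt_atTop i'))).exists
    exact hj ▸ hj' ▸ hv_le hii' hi'j le_rfl
  obtain ⟨γ, hγ⟩ := exists_eventually_eq_of_eventually_antitone hι hΓ (f := fun i => -β i)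
    (Eventually.of_forall fun _ _ h => neg_le_neg (hβ_mono h))
  obtain ⟨p, hp⟩ := eventually_atTop.1 hγ
  obtain ⟨g, hg, hpg, hgβ⟩ := exists_strictMono_forall_lt_imp hι p hβ
  let _ := SuccOrder.ofLinearWellFoundedLT ι
  have : Countable ι := countable_of_strictMono_of_map_sub_eq hneg hmul hres (hx.comp hg)
    (γ := -γ) fun i j hij => by rw [Function.comp_def, hgβ i j hij, ← hp _ (hpg i).le, neg_neg]
  exact not_bddAbove_univ ((hι univ).1 countable_univ)

end Valuation

/-- Let `K` be an ordered field with a convex valuation `v` onto an ordered abelian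
group `Γ` (so `v` is a surjective valuation, decreasing on positive elements, which
encodes convexity of the valuation ring) with archimedean residue field (every element
of the valuation ring is bounded by a natural number). Then `K` is short iff `Γ` is
short. -/
theorem short_ordered_field_iff_valueGroup {K Γ : Type u} [Field K] [LinearOrder K] [IsStrictOrderedRing K]
    [AddCommGroup Γ] [LinearOrder Γ] [IsOrderedAddMonoid Γ] (v : K → Γ)
    (hneg : ∀ x : K, x ≠ 0 → v (-x) = v x)
    (hmul : ∀ x y : K, x ≠ 0 → y ≠ 0 → v (x * y) = v x + v y)
    (hconv : ∀ x y : K, 0 < x → x ≤ y → v y ≤ v x)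
    (hsurj : ∀ γ : Γ, ∃ x : K, x ≠ 0 ∧ v x = γ)
    (hres : ∀ x : K, (x = 0 ∨ 0 ≤ v x) → ∃ n : ℕ, x < (n : K)) :
    RelShort ((· < ·) : K → K → Prop) ↔ RelShort ((· < ·) : Γ → Γ → Prop) := by
  refine ⟨fun hK => ?_, fun hΓ => ?_⟩
  · obtain ⟨s, hs⟩ := exists_strictAnti_section hneg hconv hsurj
    exact hK.of_strictAnti hs
  · have := Cardinal.noMaxOrder (aleph0_le_aleph 1)
    have hK := not_exists_strictMono_of_not_exists_strictAnti countable_iff_bddAbove_omegaOne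
      hneg hmul hconv hres hΓ.2
    exact ⟨hK, fun ⟨x, hx⟩ => hK ⟨fun i => -x i, StrictAnti.neg hx⟩⟩
end
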